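/- arXiv:2106.08666 — 5 statements merged into one kernel-verified Lean document; each statement's English description precedes it below -/
import Mathlib

section
/- Let Q be a quiver of type A_n and let L, E be indecomposable representations of Q over ℂ. Then dim Hom(L,E) · dim Ext¹(L,E) = 0, i.e., Hom(L,E) and Ext¹(L,E) cannot both be nonzero. -/
/-!  Representations of a quiver of type `A_{n+1}`:  vertices `Fin (n+1)`, edges `Fin n`,
where the edge `i` joins the vertices `i` and `i+1` and the orientation function
`o : Fin n → Bool` orients it from `i` to `i+1` (if `o i = true`) or from `i+1` to `i`
(if `o i = false`). -/

/-- Source of the `i`-th arrow. -/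
def ASrc {n : ℕ} (o : Fin n → Bool) (i : Fin n) : Fin (n + 1) :=
  if o i then i.castSucc else i.succ

/-- Target of the `i`-th arrow. -/
def ATgt {n : ℕ} (o : Fin n → Bool) (i : Fin n) : Fin (n + 1) :=
  if o i then i.succ else i.castSucc

/-- A finite-dimensional complex representation of the `A_{n+1}` quiver with orientation `o`. -/
structure ARep (n : ℕ) (o : Fin n → Bool) where
  M : Fin (n + 1) → Type
  [addCommGroup : ∀ v, AddCommGroup (M v)]
  [module : ∀ v, Module ℂ (M v)]
  [finite : ∀ v, FiniteDimensional ℂ (M v)]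
  f : ∀ i : Fin n, M (ASrc o i) →ₗ[ℂ] M (ATgt o i)

attribute [instance] ARep.addCommGroup ARep.module ARep.finite

namespace ARep

variable {n : ℕ} {o : Fin n → Bool}

/-- The space of morphisms `X → Y` of representations, as a submodule of
`∀ v, X.M v →ₗ Y.M v`. -/
def HomSub (X Y : ARep n o) : Submodule ℂ (∀ v, X.M v →ₗ[ℂ] Y.M v) where
  carrier := {h | ∀ i : Fin n, (h (ATgt o i)).comp (X.f i) = (Y.f i).comp (h (ASrc o i))}
  add_mem' := by
    intro a b ha hb i
    simp only [Pi.add_apply, LinearMap.add_comp, LinearMap.comp_add, ha i, hb i]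
  zero_mem' := by
    intro i
    simp
  smul_mem' := by
    intro c a ha i
    simp only [Pi.smul_apply, LinearMap.smul_comp, LinearMap.comp_smul, ha i]

/-- The differential of the standard 2-term complex computing `Hom` (kernel) and `Ext¹`
(cokernel) over the hereditary path algebra. -/
noncomputable def extMap (X Y : ARep n o) :
    (∀ v, X.M v →ₗ[ℂ] Y.M v) →ₗ[ℂ] (∀ i : Fin n, X.M (ASrc o i) →ₗ[ℂ] Y.M (ATgt o i)) where
  toFun h := fun i => (Y.f i).comp (h (ASrc o i)) - (h (ATgt o i)).comp (X.f i)
  map_add' a b := by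
    funext i
    simp only [Pi.add_apply, LinearMap.comp_add, LinearMap.add_comp]
    abel
  map_smul' c a := by
    funext i
    simp only [Pi.smul_apply, LinearMap.comp_smul, LinearMap.smul_comp, smul_sub,
      RingHom.id_apply]

/-- `dim Hom(X,Y)`. -/
noncomputable def dimHom (X Y : ARep n o) : ℕ :=
  Module.finrank ℂ (HomSub X Y)

/-- `dim Ext¹(X,Y)`. -/
noncomputable def dimExt (X Y : ARep n o) : ℕ :=
  Module.finrank ℂ
    ((∀ i : Fin n, X.M (ASrc o i) →ₗ[ℂ] Y.M (ATgt o i)) ⧸ LinearMap.range (extMap X Y))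

/-- A representation is indecomposable iff it is nonzero and its only idempotent
endomorphisms are `0` and the identity. -/
def Indecomposable (X : ARep n o) : Prop :=
  (∃ v, ∃ x : X.M v, x ≠ 0) ∧
  ∀ e : ∀ v, X.M v →ₗ[ℂ] X.M v, e ∈ HomSub X X → (∀ v, (e v).comp (e v) = e v) →
    e = 0 ∨ e = fun _ => LinearMap.id

end ARep

/-!
An indecomposable representation `X` of a quiver of type `A` is supported on an interval, and
each arrow `f i` is injective when its target is nonzero and surjective when its source is
nonzero. Otherwise the kernel (or the cokernel) of `f i` splits off, because on a half-line of
the quiver any subspace `W` at its end vertex is, at that vertex, one summand of a splitting of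
the half-line into two subrepresentations (transport `W` along the arrow to the neighbouring
vertex and induct on the length).

A nonzero morphism `h : L → E` is then nonzero at every vertex of the interval
`supp L ∩ supp E`, and this forces every arrow `s → t` with `L_s ≠ 0 ≠ E_t` to have both
ends in both supports. So along every arrow either `Hom(L_s, E_t) = 0`, or `L.f` is injective
and `E.f` is surjective; in both cases the equations `E.f ∘ k_s - k_t ∘ L.f = μ` defining
`Ext¹` can be solved arrow by arrow starting from the vertex `0`, and `Ext¹(L, E) = 0`.
-/

open Set Function

section LinearAlgebra

variable {R K M N : Type*} [Ring R] [DivisionRing K]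

theorem Submodule.projection_comp_of_map_le [AddCommGroup M] [Module R M] [AddCommGroup N]
    [Module R N] {p q : Submodule R M} {p' q' : Submodule R N} (hpq : IsCompl p q)
    (hpq' : IsCompl p' q') {f : M →ₗ[R] N} (hp : p.map f ≤ p') (hq : q.map f ≤ q') :
    (p'.projection q' hpq').comp f = f.comp (p.projection q hpq) := by
  ext x
  have hx : f x = f (p.projection q hpq x) + f (x - p.projection q hpq x) := by
    rw [← map_add, add_sub_cancel]
  have hq' : f (x - p.projection q hpq x) ∈ q' := hq ⟨_, sub_projection_mem hpq x, rfl⟩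
  have hp' : f (p.projection q hpq x) ∈ p' := hp ⟨_, projection_apply_mem hpq x, rfl⟩
  simp only [LinearMap.comp_apply]
  rw [hx, map_add, projection_apply_of_mem_left hpq' hp',
    (projection_apply_eq_zero_iff hpq').mpr hq', add_zero]

theorem Submodule.map_le_of_subsingleton [AddCommGroup M] [Module R M] [AddCommGroup N]
    [Module R N] (f : M →ₗ[R] N) (P : Submodule R M) (Q : Submodule R N)
    (h : Subsingleton M ∨ Subsingleton N) : P.map f ≤ Q := by
  rintro _ ⟨x, -, rfl⟩
  rcases h with h | h
  · rw [Subsingleton.elim x 0, map_zero]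
    exact Q.zero_mem
  · rw [Subsingleton.elim (f x) 0]
    exact Q.zero_mem

variable [AddCommGroup M] [Module K M] [AddCommGroup N] [Module K N]

theorem Submodule.exists_isCompl_map_le_of_isCompl_comap (g : M →ₗ[K] N) (W : Submodule K N)
    {V' : Submodule K M} (h : IsCompl (W.comap g) V') : ∃ V, IsCompl W V ∧ V'.map g ≤ V := by
  have hdisj : Disjoint (V'.map g) W := by
    refine Submodule.disjoint_def.mpr ?_
    rintro _ ⟨v, hv, rfl⟩ hvW
    rw [Submodule.disjoint_def.mp h.disjoint v hvW hv, map_zero]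
  obtain ⟨V, hle, hV⟩ := hdisj.exists_isCompl
  exact ⟨V, hV.symm, hle⟩

theorem Submodule.exists_isCompl_map_le_of_isCompl_map (g : M →ₗ[K] N) (W : Submodule K M)
    {V' : Submodule K N} (h : IsCompl (W.map g) V') : ∃ V, IsCompl W V ∧ V.map g ≤ V' := by
  have hcodisj : Codisjoint (V'.comap g) W := by
    refine codisjoint_iff.mpr (eq_top_iff.mpr fun x _ => ?_)
    obtain ⟨_, ⟨w, hw, rfl⟩, v, hv, hx⟩ :=
      Submodule.mem_sup.mp (h.sup_eq_top ▸ Submodule.mem_top : g x ∈ W.map g ⊔ V')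
    have hxw : x - w ∈ V'.comap g := by
      rw [Submodule.mem_comap, map_sub, ← hx, add_sub_cancel_left]
      exact hv
    simpa using Submodule.add_mem_sup hxw hw
  obtain ⟨V, hle, hV⟩ := hcodisj.exists_isCompl
  exact ⟨V, hV.symm, Submodule.map_le_iff_le_comap.mpr hle⟩

end LinearAlgebra

theorem Set.OrdConnected.disjoint_of_covBy {α : Type*} [LinearOrder α] {A B : Set α}
    (hA : A.OrdConnected) (hB : B.OrdConnected) {a b : α} (hab : a ⋖ b) (ha : a ∈ A)
    (haB : a ∉ B) (hb : b ∈ B) (hbA : b ∉ A) : Disjoint A B := by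
  refine Set.disjoint_left.mpr fun x hxA hxB => ?_
  rcases le_or_gt x a with hxa | hax
  · exact haB (hB.out hxB hb ⟨hxa, hab.le⟩)
  · exact hbA (hA.out ha hxA ⟨hab.le, hab.ge_of_gt hax⟩)

theorem Set.OrdConnected.iff_of_forall_iff_succ {n : ℕ} {I : Set (Fin (n + 1))}
    (hI : I.OrdConnected) {P : Fin (n + 1) → Prop}
    (hP : ∀ i : Fin n, i.castSucc ∈ I → i.succ ∈ I → (P i.castSucc ↔ P i.succ))
    {a b : Fin (n + 1)} (ha : a ∈ I) (hb : b ∈ I) : P a ↔ P b := by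
  wlog hab : a ≤ b generalizing a b
  · exact (this hb ha (le_of_not_ge hab)).symm
  induction b using Fin.induction with
  | zero => rw [Fin.le_zero_iff.mp hab]
  | succ i ih =>
    rcases hab.eq_or_lt with rfl | hlt
    · rfl
    have hi : i.castSucc ∈ I :=
      hI.out ha hb ⟨Fin.le_castSucc_iff.mpr hlt, Fin.castSucc_le_succ i⟩
    exact (ih hi (Fin.le_castSucc_iff.mpr hlt)).trans (hP i hi hb)

namespace ARep

variable {n : ℕ} {o : Fin n → Bool}

theorem ASrc_ATgt_cases (o : Fin n → Bool) (i : Fin n) :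
    ASrc o i = i.castSucc ∧ ATgt o i = i.succ ∨
      ASrc o i = i.succ ∧ ATgt o i = i.castSucc := by
  unfold ASrc ATgt
  cases o i <;> simp

theorem ASrc_ne_ATgt (o : Fin n → Bool) (i : Fin n) : ASrc o i ≠ ATgt o i := by
  rcases ASrc_ATgt_cases o i with ⟨hs, ht⟩ | ⟨hs, ht⟩ <;> rw [hs, ht]
  exacts [Fin.castSucc_lt_succ.ne, Fin.castSucc_lt_succ.ne']

theorem ASrc_covBy_or_ATgt_covBy (o : Fin n → Bool) (i : Fin n) :
    ASrc o i ⋖ ATgt o i ∨ ATgt o i ⋖ ASrc o i := by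
  have hcov : i.castSucc ⋖ i.succ := ⟨Fin.castSucc_lt_succ, fun x h1 h2 => by
    simp only [Fin.lt_def, Fin.val_castSucc, Fin.val_succ] at h1 h2
    omega⟩
  rcases ASrc_ATgt_cases o i with ⟨hs, ht⟩ | ⟨hs, ht⟩ <;> rw [hs, ht] <;> simp [hcov]

theorem ASrc_mem_Icc (o : Fin n → Bool) (i : Fin n) : ASrc o i ∈ Icc i.castSucc i.succ := by
  rcases ASrc_ATgt_cases o i with ⟨hs, -⟩ | ⟨hs, -⟩ <;> simp [hs, Fin.castSucc_le_succ]

theorem ATgt_mem_Icc (o : Fin n → Bool) (i : Fin n) : ATgt o i ∈ Icc i.castSucc i.succ := by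
  rcases ASrc_ATgt_cases o i with ⟨-, ht⟩ | ⟨-, ht⟩ <;> simp [ht, Fin.castSucc_le_succ]

def supp (X : ARep n o) : Set (Fin (n + 1)) := {v | Nontrivial (X.M v)}

theorem notMem_supp {X : ARep n o} {v : Fin (n + 1)} : v ∉ X.supp ↔ Subsingleton (X.M v) :=
  not_nontrivial_iff_subsingleton

structure IsSplitting (X : ARep n o) (A : Set (Fin n)) (U V : ∀ v, Submodule ℂ (X.M v)) :
    Prop where
  isCompl : ∀ v, IsCompl (U v) (V v)
  map_left_le : ∀ i ∈ A, (U (ASrc o i)).map (X.f i) ≤ U (ATgt o i)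
  map_right_le : ∀ i ∈ A, (V (ASrc o i)).map (X.f i) ≤ V (ATgt o i)

namespace IsSplitting

variable {X : ARep n o} {A : Set (Fin n)} {U V : ∀ v, Submodule ℂ (X.M v)}

theorem symm (h : X.IsSplitting A U V) : X.IsSplitting A V U :=
  ⟨fun v => (h.isCompl v).symm, h.map_right_le, h.map_left_le⟩

theorem bot_top (X : ARep n o) : X.IsSplitting univ (fun _ => ⊥) (fun _ => ⊤) :=
  ⟨fun _ => isCompl_bot_top, fun _ _ => by simp, fun _ _ => le_top⟩

theorem insert_of_map_le (h : X.IsSplitting A U V) {i : Fin n}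
    (hU : (U (ASrc o i)).map (X.f i) ≤ U (ATgt o i))
    (hV : (V (ASrc o i)).map (X.f i) ≤ V (ATgt o i)) : X.IsSplitting (insert i A) U V :=
  ⟨h.isCompl, forall_mem_insert.mpr ⟨hU, h.map_left_le⟩,
    forall_mem_insert.mpr ⟨hV, h.map_right_le⟩⟩

theorem mono (h : X.IsSplitting A U V) {B : Set (Fin n)} (hBA : B ⊆ A) : X.IsSplitting B U V :=
  ⟨h.isCompl, fun i hi => h.map_left_le i (hBA hi), fun i hi => h.map_right_le i (hBA hi)⟩

theorem union_of_eqOn (h : X.IsSplitting A U V) {B : Set (Fin n)}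
    {U₀ V₀ : ∀ v, Submodule ℂ (X.M v)} (h₀ : X.IsSplitting B U₀ V₀)
    {R : Set (Fin (n + 1))} (hR : ∀ v ∈ R, U v = U₀ v ∧ V v = V₀ v)
    (hB : ∀ j ∈ B, ASrc o j ∈ R ∧ ATgt o j ∈ R) :
    X.IsSplitting (A ∪ B) U V := by
  refine ⟨h.isCompl, fun j hj => ?_, fun j hj => ?_⟩ <;> rcases hj with hj | hj
  · exact h.map_left_le j hj
  · rw [(hR _ (hB j hj).1).1, (hR _ (hB j hj).2).1]
    exact h₀.map_left_le j hj
  · exact h.map_right_le j hj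
  · rw [(hR _ (hB j hj).1).2, (hR _ (hB j hj).2).2]
    exact h₀.map_right_le j hj

theorem update (h : X.IsSplitting A U V) {r : Fin (n + 1)}
    (hA : ∀ j ∈ A, ASrc o j ≠ r ∧ ATgt o j ≠ r) {P Q : Submodule ℂ (X.M r)}
    (hPQ : IsCompl P Q) :
    X.IsSplitting A (Function.update U r P) (Function.update V r Q) := by
  refine ⟨fun v => ?_, fun j hj => ?_, fun j hj => ?_⟩
  · rcases eq_or_ne v r with rfl | hv
    · simpa using hPQ
    · simpa [hv] using h.isCompl v
  all_goals rw [update_of_ne (hA j hj).1, update_of_ne (hA j hj).2]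
  exacts [h.map_left_le j hj, h.map_right_le j hj]

end IsSplitting

theorem Indecomposable.eq_bot_or_eq_bot {X : ARep n o} (hX : X.Indecomposable)
    {U V : ∀ v, Submodule ℂ (X.M v)} (h : X.IsSplitting univ U V) :
    (∀ v, U v = ⊥) ∨ (∀ v, V v = ⊥) := by
  let e : ∀ v, X.M v →ₗ[ℂ] X.M v := fun v => (U v).projection (V v) (h.isCompl v)
  have he : e ∈ HomSub X X := fun i =>
    Submodule.projection_comp_of_map_le _ _ (h.map_left_le i trivial) (h.map_right_le i trivial)
  rcases hX.2 e he fun v => (Submodule.isIdempotentElem_projection (h.isCompl v)).eq with h0 | h1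
  · refine .inl fun v => ?_
    rw [← Submodule.range_projection (h.isCompl v)]
    exact (congrArg LinearMap.range (congrFun h0 v)).trans LinearMap.range_zero
  · refine .inr fun v => ?_
    rw [← Submodule.ker_projection (h.isCompl v)]
    exact (congrArg LinearMap.ker (congrFun h1 v)).trans LinearMap.ker_id

theorem Indecomposable.ordConnected_supp {X : ARep n o} (hX : X.Indecomposable) :
    X.supp.OrdConnected := by
  classical
  refine ⟨fun a ha c hc b ⟨hab, hbc⟩ => by_contra fun hb => ?_⟩
  have hside : ∀ i, (ASrc o i < b ↔ ATgt o i < b) ∨ ASrc o i = b ∨ ATgt o i = b := by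
    intro i
    have hs := ASrc_mem_Icc o i
    have ht := ATgt_mem_Icc o i
    simp only [mem_Icc, Fin.le_def, Fin.lt_def, Fin.ext_iff, Fin.val_castSucc,
      Fin.val_succ] at hs ht ⊢
    omega
  -- cutting at the zero space `X.M b` splits `X` into the part left of `b` and the rest
  have hsplit : X.IsSplitting univ (fun v => if v < b then ⊤ else ⊥)
      (fun v => if v < b then ⊥ else ⊤) := by
    refine ⟨fun v => ?_, fun i _ => ?_, fun i _ => ?_⟩
    · split_ifs
      exacts [isCompl_top_bot, isCompl_bot_top]
    all_goals
      rcases hside i with hiff | hs | ht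
      · split_ifs <;> simp_all
      · exact Submodule.map_le_of_subsingleton _ _ _ (.inl (notMem_supp.mp (hs ▸ hb)))
      · exact Submodule.map_le_of_subsingleton _ _ _ (.inr (notMem_supp.mp (ht ▸ hb)))
  have : Nontrivial (X.M a) := ha
  have : Nontrivial (X.M c) := hc
  rcases hX.eq_bot_or_eq_bot hsplit with hU | hV
  · have hlt : a < b := hab.lt_of_ne fun h => hb (h ▸ ha)
    exact top_ne_bot (α := Submodule ℂ (X.M a)) (by simpa [hlt] using hU a)
  · exact top_ne_bot (α := Submodule ℂ (X.M c)) (by simpa [not_lt.mpr hbc] using hV c)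

namespace IsSplitting

variable {X : ARep n o} {U₀ V₀ : ∀ v, Submodule ℂ (X.M v)}

/-- The subspace `W` prescribed at the new end `r` of the arrow `i` is pulled back (or pushed
forward) along `f i` to the old end `r'`, and the complement chosen there induces one of `W`. -/
theorem exists_insert {A : Set (Fin n)} {R : Set (Fin (n + 1))} {i : Fin n} {r r' : Fin (n + 1)}
    (hrr' : r = ATgt o i ∧ r' = ASrc o i ∨ r = ASrc o i ∧ r' = ATgt o i)
    (hA : ∀ j ∈ A, ASrc o j ≠ r ∧ ATgt o j ≠ r)
    (ih : ∀ W' : Submodule ℂ (X.M r'), ∃ U V, X.IsSplitting A U V ∧ U r' = W' ∧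
      ∀ v ∈ R, U v = U₀ v ∧ V v = V₀ v)
    (W : Submodule ℂ (X.M r)) :
    ∃ U V, X.IsSplitting (insert i A) U V ∧ U r = W ∧
      ∀ v ∈ R, v ≠ r → U v = U₀ v ∧ V v = V₀ v := by
  have hne := ASrc_ne_ATgt o i
  rcases hrr' with ⟨rfl, rfl⟩ | ⟨rfl, rfl⟩
  · obtain ⟨U, V, h, hU, hR⟩ := ih (W.comap (X.f i))
    obtain ⟨C, hC, hVC⟩ :=
      Submodule.exists_isCompl_map_le_of_isCompl_comap (X.f i) W (hU ▸ h.isCompl (ASrc o i))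
    refine ⟨_, _, (h.update hA hC).insert_of_map_le ?_ ?_, update_self .., fun v hv hvr => ?_⟩
    · rw [update_self, update_of_ne hne, hU]
      exact Submodule.map_comap_le _ _
    · rwa [update_self, update_of_ne hne]
    · rw [update_of_ne hvr, update_of_ne hvr]
      exact hR v hv
  · obtain ⟨U, V, h, hU, hR⟩ := ih (W.map (X.f i))
    obtain ⟨C, hC, hVC⟩ :=
      Submodule.exists_isCompl_map_le_of_isCompl_map (X.f i) W (hU ▸ h.isCompl (ATgt o i))
    refine ⟨_, _, (h.update hA hC).insert_of_map_le ?_ ?_, update_self .., fun v hv hvr => ?_⟩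
    · rw [update_self, update_of_ne hne.symm, hU]
    · rwa [update_self, update_of_ne hne.symm]
    · rw [update_of_ne hvr, update_of_ne hvr]
      exact hR v hv

theorem exists_Iic (h₀ : X.IsSplitting univ U₀ V₀) (m : Fin (n + 1))
    (W : Submodule ℂ (X.M m)) :
    ∃ U V, X.IsSplitting {j | j.succ ≤ m} U V ∧ U m = W ∧
      ∀ v, m < v → U v = U₀ v ∧ V v = V₀ v := by
  induction m using Fin.induction with
  | zero =>
    obtain ⟨C, hC⟩ := W.exists_isCompl
    refine ⟨_, _, (h₀.mono (subset_univ _)).update (fun j hj => ?_) hC, update_self ..,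
      fun v hv => ?_⟩
    · exact absurd hj (Fin.succ_pos j).not_ge
    · rw [update_of_ne hv.ne', update_of_ne hv.ne']
      exact ⟨rfl, rfl⟩
  | succ i ih =>
    have hrr' : i.succ = ATgt o i ∧ i.castSucc = ASrc o i ∨
        i.succ = ASrc o i ∧ i.castSucc = ATgt o i := by
      rcases ASrc_ATgt_cases o i with ⟨hs, ht⟩ | ⟨hs, ht⟩ <;> simp [hs, ht]
    have hA : ∀ j ∈ {j : Fin n | j.succ ≤ i.castSucc},
        ASrc o j ≠ i.succ ∧ ATgt o j ≠ i.succ :=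
      fun j hj => by
        have hlt := (hj : j.succ ≤ i.castSucc).trans_lt Fin.castSucc_lt_succ
        exact ⟨((ASrc_mem_Icc o j).2.trans_lt hlt).ne, ((ATgt_mem_Icc o j).2.trans_lt hlt).ne⟩
    obtain ⟨U, V, h, hU, hR⟩ := exists_insert (R := {v | i.castSucc < v}) hrr' hA ih W
    refine ⟨U, V, h.mono fun j hj => ?_, hU,
      fun v hv => hR v (Fin.castSucc_lt_succ.trans hv) hv.ne'⟩
    rcases (Fin.succ_le_succ_iff.mp hj).eq_or_lt with rfl | hlt
    exacts [mem_insert _ _, Or.inr (Fin.succ_le_castSucc_iff.mpr hlt)]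

theorem exists_Ici (h₀ : X.IsSplitting univ U₀ V₀) (m : Fin (n + 1))
    (W : Submodule ℂ (X.M m)) :
    ∃ U V, X.IsSplitting {j | m ≤ j.castSucc} U V ∧ U m = W ∧
      ∀ v, v < m → U v = U₀ v ∧ V v = V₀ v := by
  induction m using Fin.reverseInduction with
  | last =>
    obtain ⟨C, hC⟩ := W.exists_isCompl
    refine ⟨_, _, (h₀.mono (subset_univ _)).update (fun j hj => ?_) hC, update_self ..,
      fun v hv => ?_⟩
    · exact absurd hj (Fin.castSucc_lt_last j).not_ge
    · rw [update_of_ne hv.ne, update_of_ne hv.ne]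
      exact ⟨rfl, rfl⟩
  | cast i ih =>
    have hrr' : i.castSucc = ATgt o i ∧ i.succ = ASrc o i ∨
        i.castSucc = ASrc o i ∧ i.succ = ATgt o i := by
      rcases ASrc_ATgt_cases o i with ⟨hs, ht⟩ | ⟨hs, ht⟩ <;> simp [hs, ht]
    have hA : ∀ j ∈ {j : Fin n | i.succ ≤ j.castSucc}, ASrc o j ≠ i.castSucc ∧
        ATgt o j ≠ i.castSucc :=
      fun j hj => by
        have hlt := Fin.castSucc_lt_succ.trans_le (hj : i.succ ≤ j.castSucc)
        exact ⟨(hlt.trans_le (ASrc_mem_Icc o j).1).ne', (hlt.trans_le (ATgt_mem_Icc o j).1).ne'⟩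
    obtain ⟨U, V, h, hU, hR⟩ := exists_insert (R := {v | v < i.succ}) hrr' hA ih W
    refine ⟨U, V, h.mono fun j hj => ?_, hU,
      fun v hv => hR v (hv.trans Fin.castSucc_lt_succ) hv.ne⟩
    rcases (Fin.castSucc_le_castSucc_iff.mp hj).eq_or_lt with rfl | hlt
    exacts [mem_insert _ _, Or.inr (Fin.succ_le_castSucc_iff.mpr hlt)]

theorem exists_of_edge (h₀ : X.IsSplitting univ U₀ V₀) {i : Fin n} {r r' : Fin (n + 1)}
    (hr : r = i.castSucc ∧ r' = i.succ ∨ r = i.succ ∧ r' = i.castSucc)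
    (W : Submodule ℂ (X.M r)) :
    ∃ U V, X.IsSplitting {i}ᶜ U V ∧ U r = W ∧ U r' = U₀ r' ∧ V r' = V₀ r' := by
  rcases hr with ⟨rfl, rfl⟩ | ⟨rfl, rfl⟩
  · obtain ⟨U, V, h, hU, hR⟩ := h₀.exists_Iic i.castSucc W
    have h' := h.union_of_eqOn (h₀.mono (subset_univ {j | i < j})) hR fun j hj =>
      ⟨(Fin.castSucc_lt_castSucc_iff.mpr hj).trans_le (ASrc_mem_Icc o j).1,
        (Fin.castSucc_lt_castSucc_iff.mpr hj).trans_le (ATgt_mem_Icc o j).1⟩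
    refine ⟨U, V, h'.mono fun j hj => ?_, hU, hR _ Fin.castSucc_lt_succ⟩
    rcases lt_or_gt_of_ne (hj : j ≠ i) with hlt | hlt
    exacts [Or.inl (Fin.succ_le_castSucc_iff.mpr hlt), Or.inr hlt]
  · obtain ⟨U, V, h, hU, hR⟩ := h₀.exists_Ici i.succ W
    have h' := h.union_of_eqOn (h₀.mono (subset_univ {j | j < i})) hR fun j hj =>
      ⟨(ASrc_mem_Icc o j).2.trans_lt (Fin.succ_lt_succ_iff.mpr hj),
        (ATgt_mem_Icc o j).2.trans_lt (Fin.succ_lt_succ_iff.mpr hj)⟩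
    refine ⟨U, V, h'.mono fun j hj => ?_, hU, hR _ Fin.castSucc_lt_succ⟩
    rcases lt_or_gt_of_ne (hj : j ≠ i) with hlt | hlt
    exacts [Or.inr hlt, Or.inl (Fin.succ_le_castSucc_iff.mpr hlt)]

end IsSplitting

namespace Indecomposable

variable {X : ARep n o} {i : Fin n}

theorem injective (hX : X.Indecomposable) (ht : ATgt o i ∈ X.supp) : Injective (X.f i) := by
  by_contra hinj
  obtain ⟨U, V, h, hUs, hUt, hVt⟩ :=
    (IsSplitting.bot_top X).exists_of_edge (ASrc_ATgt_cases o i) (LinearMap.ker (X.f i))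
  have hsplit : X.IsSplitting univ U V := by
    refine (h.insert_of_map_le ?_ ?_).mono fun j _ => eq_or_ne j i
    · rw [hUs, hUt, Submodule.map_le_iff_le_comap, Submodule.comap_bot]
    · rw [hVt]
      exact le_top
  have : Nontrivial (X.M (ATgt o i)) := ht
  rcases hX.eq_bot_or_eq_bot hsplit with hU | hV
  · exact hinj (LinearMap.ker_eq_bot.mp (hUs ▸ hU _))
  · exact top_ne_bot (hVt ▸ hV _)

theorem surjective (hX : X.Indecomposable) (hs : ASrc o i ∈ X.supp) : Surjective (X.f i) := by
  by_contra hsurj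
  obtain ⟨U, V, h, hUt, hUs, hVs⟩ := (IsSplitting.bot_top X).symm.exists_of_edge
    ((ASrc_ATgt_cases o i).symm.imp And.symm And.symm) (LinearMap.range (X.f i))
  have hsplit : X.IsSplitting univ U V := by
    refine (h.insert_of_map_le ?_ ?_).mono fun j _ => eq_or_ne j i
    · rw [hUs, hUt, Submodule.map_top]
    · rw [hVs, Submodule.map_bot]
      exact bot_le
  have : Nontrivial (X.M (ASrc o i)) := hs
  rcases hX.eq_bot_or_eq_bot hsplit with hU | hV
  · exact top_ne_bot (hUs ▸ hU _)
  · exact hsurj (LinearMap.range_eq_top.mp (hUt ▸ eq_top_of_isCompl_bot (hV _ ▸ h.isCompl _)))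

end Indecomposable

section Hom

variable {L E : ARep n o} {h : ∀ v, L.M v →ₗ[ℂ] E.M v} {i : Fin n}

theorem hom_eq_zero_of_notMem_supp {v : Fin (n + 1)} (hv : v ∉ L.supp ∨ v ∉ E.supp) :
    h v = 0 := by
  rcases hv with hv | hv <;> have := notMem_supp.mp hv <;> exact Subsingleton.elim _ _

theorem hom_ATgt_eq_zero (hh : h ∈ HomSub L E) (hL : Surjective (L.f i))
    (h0 : h (ASrc o i) = 0) : h (ATgt o i) = 0 :=
  (LinearMap.cancel_right hL).mp (by rw [hh i, h0, LinearMap.comp_zero, LinearMap.zero_comp])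

theorem hom_ASrc_eq_zero (hh : h ∈ HomSub L E) (hE : Injective (E.f i))
    (h0 : h (ATgt o i) = 0) : h (ASrc o i) = 0 :=
  (LinearMap.cancel_left hE).mp (by rw [← hh i, h0, LinearMap.zero_comp, LinearMap.comp_zero])

theorem hom_ne_zero_of_mem_supp (hL : L.Indecomposable) (hE : E.Indecomposable)
    (hh : h ∈ HomSub L E) {u w : Fin (n + 1)} (hu : u ∈ L.supp ∩ E.supp)
    (hw : w ∈ L.supp ∩ E.supp) (h0 : h u ≠ 0) : h w ≠ 0 := by
  have hI := hL.ordConnected_supp.inter hE.ordConnected_supp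
  have hedge : ∀ i, ASrc o i ∈ L.supp ∩ E.supp → ATgt o i ∈ L.supp ∩ E.supp →
      (h (ASrc o i) = 0 ↔ h (ATgt o i) = 0) := fun i hs ht =>
    ⟨hom_ATgt_eq_zero hh (hL.surjective hs.1), hom_ASrc_eq_zero hh (hE.injective ht.2)⟩
  refine (not_congr (hI.iff_of_forall_iff_succ (P := fun v => h v = 0) ?_ hu hw)).mp h0
  intro i hs ht
  rcases ASrc_ATgt_cases o i with ⟨h1, h2⟩ | ⟨h1, h2⟩ <;>
    have := hedge i (by rwa [h1]) (by rwa [h2]) <;> rw [h1, h2] at this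
  exacts [this, this.symm]

theorem mem_supp_of_hom (hL : L.Indecomposable) (hE : E.Indecomposable) (hh : h ∈ HomSub L E)
    (h0 : h ≠ 0) (hs : ASrc o i ∈ L.supp) (ht : ATgt o i ∈ E.supp) :
    ATgt o i ∈ L.supp ∧ ASrc o i ∈ E.supp := by
  obtain ⟨v₀, hv₀⟩ := Function.ne_iff.mp h0
  have hv₀I : v₀ ∈ L.supp ∩ E.supp := by
    by_contra hv
    rw [mem_inter_iff, not_and_or] at hv
    exact hv₀ (hom_eq_zero_of_notMem_supp hv)
  by_cases hLt : ATgt o i ∈ L.supp <;> by_cases hEs : ASrc o i ∈ E.supp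
  · exact ⟨hLt, hEs⟩
  · have := hom_ATgt_eq_zero hh (hL.surjective hs) (hom_eq_zero_of_notMem_supp (.inr hEs))
    exact absurd this (hom_ne_zero_of_mem_supp hL hE hh hv₀I ⟨hLt, ht⟩ hv₀)
  · have := hom_ASrc_eq_zero hh (hE.injective ht) (hom_eq_zero_of_notMem_supp (.inl hLt))
    exact absurd this (hom_ne_zero_of_mem_supp hL hE hh hv₀I ⟨hs, hEs⟩ hv₀)
  · have hdisj : Disjoint L.supp E.supp := by
      rcases ASrc_covBy_or_ATgt_covBy o i with hcov | hcov
      · exact hL.ordConnected_supp.disjoint_of_covBy hE.ordConnected_supp hcov hs hEs ht hLt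
      · exact (hE.ordConnected_supp.disjoint_of_covBy hL.ordConnected_supp hcov ht hLt hs hEs).symm
    exact (Set.disjoint_left.mp hdisj hv₀I.1 hv₀I.2).elim

end Hom

section Ext

variable {L E : ARep n o} {i : Fin n}

theorem extMap_apply (X Y : ARep n o) (k : ∀ v, X.M v →ₗ[ℂ] Y.M v) (i : Fin n) :
    extMap X Y k i = (Y.f i).comp (k (ASrc o i)) - (k (ATgt o i)).comp (X.f i) :=
  rfl

theorem exists_extMap_update_ATgt_eq (hL : Injective (L.f i)) (k : ∀ v, L.M v →ₗ[ℂ] E.M v)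
    (μ : L.M (ASrc o i) →ₗ[ℂ] E.M (ATgt o i)) :
    ∃ b, extMap L E (update k (ATgt o i) b) i = μ := by
  obtain ⟨g, hg⟩ := (L.f i).exists_leftInverse_of_injective (LinearMap.ker_eq_bot.mpr hL)
  refine ⟨((E.f i).comp (k (ASrc o i)) - μ).comp g, ?_⟩
  rw [extMap_apply, update_self, update_of_ne (ASrc_ne_ATgt o i), LinearMap.comp_assoc, hg,
    LinearMap.comp_id, sub_sub_cancel]

theorem exists_extMap_update_ASrc_eq (hE : Surjective (E.f i)) (k : ∀ v, L.M v →ₗ[ℂ] E.M v)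
    (μ : L.M (ASrc o i) →ₗ[ℂ] E.M (ATgt o i)) :
    ∃ b, extMap L E (update k (ASrc o i) b) i = μ := by
  obtain ⟨g, hg⟩ := (E.f i).exists_rightInverse_of_surjective (LinearMap.range_eq_top.mpr hE)
  refine ⟨g.comp (μ + (k (ATgt o i)).comp (L.f i)), ?_⟩
  rw [extMap_apply, update_self, update_of_ne (ASrc_ne_ATgt o i).symm, ← LinearMap.comp_assoc, hg,
    LinearMap.id_comp, add_sub_cancel_right]

theorem exists_update_succ_extMap_eq
    (hi : Subsingleton (L.M (ASrc o i) →ₗ[ℂ] E.M (ATgt o i)) ∨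
      Injective (L.f i) ∧ Surjective (E.f i))
    (k : ∀ v, L.M v →ₗ[ℂ] E.M v) (μ : L.M (ASrc o i) →ₗ[ℂ] E.M (ATgt o i)) :
    ∃ k', (∀ v ≠ i.succ, k' v = k v) ∧ extMap L E k' i = μ := by
  rcases hi with hi | ⟨hL, hE⟩
  · exact ⟨k, fun _ _ => rfl, Subsingleton.elim _ _⟩
  rcases ASrc_ATgt_cases o i with ⟨-, ht⟩ | ⟨hs, -⟩
  · obtain ⟨b, hb⟩ := exists_extMap_update_ATgt_eq hL k μ
    exact ⟨_, fun v hv => update_of_ne (ht ▸ hv) _ _, hb⟩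
  · obtain ⟨b, hb⟩ := exists_extMap_update_ASrc_eq hE k μ
    exact ⟨_, fun v hv => update_of_ne (hs ▸ hv) _ _, hb⟩

theorem extMap_surjective
    (hedge : ∀ i, Subsingleton (L.M (ASrc o i) →ₗ[ℂ] E.M (ATgt o i)) ∨
      Injective (L.f i) ∧ Surjective (E.f i)) :
    Surjective (extMap L E) := by
  intro μ
  suffices ∀ m : Fin (n + 1), ∃ k, ∀ i : Fin n, i.succ ≤ m → extMap L E k i = μ i by
    obtain ⟨k, hk⟩ := this (Fin.last n)
    exact ⟨k, funext fun i => hk i (Fin.le_last _)⟩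
  intro m
  induction m using Fin.induction with
  | zero => exact ⟨0, fun i hi => absurd hi (Fin.succ_pos i).not_ge⟩
  | succ j ih =>
    obtain ⟨k, hk⟩ := ih
    obtain ⟨k', hk', hj⟩ := exists_update_succ_extMap_eq (hedge j) k (μ j)
    refine ⟨k', fun i hi => ?_⟩
    rcases (Fin.succ_le_succ_iff.mp hi).eq_or_lt with rfl | hlt
    · exact hj
    have hij := (Fin.succ_le_castSucc_iff.mpr hlt).trans_lt Fin.castSucc_lt_succ
    rw [extMap_apply, hk' _ ((ASrc_mem_Icc o i).2.trans_lt hij).ne,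
      hk' _ ((ATgt_mem_Icc o i).2.trans_lt hij).ne, ← extMap_apply]
    exact hk i (Fin.succ_le_castSucc_iff.mpr hlt)

end Ext

end ARep

open ARep in
/-- For indecomposable representations `L`, `E` of a quiver of type `A`,
`Hom(L,E)` and `Ext¹(L,E)` cannot both be nonzero:  `dim Hom(L,E) * dim Ext¹(L,E) = 0`. -/
theorem ARep.dimHom_mul_dimExt_eq_zero
    {n : ℕ} {o : Fin n → Bool} (L E : ARep n o)
    (hL : L.Indecomposable) (hE : E.Indecomposable) :
    dimHom L E * dimExt L E = 0 := by
  rcases eq_or_ne (HomSub L E) ⊥ with hHom | hHom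
  · simp [dimHom, hHom]
  obtain ⟨h, hh, h0⟩ := (Submodule.ne_bot_iff _).mp hHom
  suffices hsurj : Surjective (extMap L E) by
    rw [dimExt, LinearMap.range_eq_top.mpr hsurj, Module.finrank_zero_of_subsingleton, mul_zero]
  refine extMap_surjective fun i => ?_
  by_cases hi : ASrc o i ∈ L.supp ∧ ATgt o i ∈ E.supp
  · obtain ⟨hLt, hEs⟩ := mem_supp_of_hom hL hE hh h0 hi.1 hi.2
    exact .inr ⟨hL.injective hLt, hE.surjective hEs⟩
  · rw [not_and_or, notMem_supp, notMem_supp] at hi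
    exact .inl (by rcases hi with hi | hi <;> infer_instance)
end

section
/- Let Q be a quiver and M, N finite-dimensional representations of Q over ℂ with underlying graded vector space V. If N lies in the closure of the GL-orbit of M in the representation variety, then dim Hom(M,E) ≤ dim Hom(N,E) for every representation E, and dim Ext¹(M,E) ≤ dim Ext¹(N,E) for every representation E. -/
/-! A finite quiver is encoded by a finite vertex type `ι`, a finite arrow
type `A` and source/target maps `s t : A → ι`.  A representation with dimension vector
`d : ι → ℕ` is a family of matrices `X a : Matrix (Fin (d (t a))) (Fin (d (s a))) ℂ`
(the linear map `ℂ^{d (s a)} → ℂ^{d (t a)}` along the arrow `a`).  The group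
`GL•(V) = ∏ᵢ GL_{dᵢ}(ℂ)` acts by base change.  For two representations `X` (dimension `d`)
and `Y` (dimension `e`), the space `Hom(X,Y)` is the kernel and `Ext¹(X,Y)` the cokernel of
the standard map  `h ↦ (a ↦ Y a * h (s a) - h (t a) * X a)`  (the 2-term complex coming from
the standard projective resolution over the hereditary path algebra).

By rank–nullity both inequalities reduce to `rank δ_N ≤ rank δ_M`, where
`δ_X = quivExtMap s t d e X E` is a map between spaces that do not depend on `X`. Base change
by `g` composes `δ_M` with invertible right multiplications by the `g i`, so the rank is constant
on the orbit of `M`; and the rank is lower semicontinuous (linear independence is an open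
condition), so `{X | rank δ_X ≤ rank δ_M}` is closed and contains the orbit closure. -/

variable {ι A : Type} [Fintype ι] [Fintype A]

/-- The standard 2-term complex differential whose kernel is `Hom(X,Y)` and whose cokernel is
`Ext¹(X,Y)`. -/
noncomputable def quivExtMap (s t : A → ι) (d e : ι → ℕ)
    (X : ∀ a : A, Matrix (Fin (d (t a))) (Fin (d (s a))) ℂ)
    (Y : ∀ a : A, Matrix (Fin (e (t a))) (Fin (e (s a))) ℂ) :
    (∀ i : ι, Matrix (Fin (e i)) (Fin (d i)) ℂ) →ₗ[ℂ]
      (∀ a : A, Matrix (Fin (e (t a))) (Fin (d (s a))) ℂ) where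
  toFun h := fun a => Y a * h (s a) - h (t a) * X a
  map_add' h h' := by
    funext a
    simp [Matrix.mul_add, Matrix.add_mul]
    abel
  map_smul' c h := by
    funext a
    simp [Matrix.mul_smul, Matrix.smul_mul, smul_sub]

/-- `dim Hom(X,Y)`. -/
noncomputable def quivDimHom (s t : A → ι) (d e : ι → ℕ)
    (X : ∀ a : A, Matrix (Fin (d (t a))) (Fin (d (s a))) ℂ)
    (Y : ∀ a : A, Matrix (Fin (e (t a))) (Fin (e (s a))) ℂ) : ℕ :=
  Module.finrank ℂ (LinearMap.ker (quivExtMap s t d e X Y))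

/-- `dim Ext¹(X,Y)`. -/
noncomputable def quivDimExt (s t : A → ι) (d e : ι → ℕ)
    (X : ∀ a : A, Matrix (Fin (d (t a))) (Fin (d (s a))) ℂ)
    (Y : ∀ a : A, Matrix (Fin (e (t a))) (Fin (e (s a))) ℂ) : ℕ :=
  Module.finrank ℂ
    ((∀ a : A, Matrix (Fin (e (t a))) (Fin (d (s a))) ℂ) ⧸
      LinearMap.range (quivExtMap s t d e X Y))

open Module
open LinearMap (range)

section RankSemicontinuity

variable {𝕜 E F X : Type*} [NontriviallyNormedField 𝕜] [CompleteSpace 𝕜]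
  [NormedAddCommGroup E] [NormedSpace 𝕜 E] [FiniteDimensional 𝕜 E]
  [NormedAddCommGroup F] [NormedSpace 𝕜 F] [TopologicalSpace X]

theorem isClosed_setOf_finrank_range_le (f : X → E →ₗ[𝕜] F)
    (hf : ∀ v, Continuous fun x => f x v) (n : ℕ) :
    IsClosed {x | finrank 𝕜 (range (f x)) ≤ n} := by
  have hcont : Continuous fun x : X => (LinearMap.toContinuousLinearMap (f x) : E →L[𝕜] F) :=
    continuous_clm_apply.2 hf
  rw [← isOpen_compl_iff]
  convert (isOpen_setOfPred_nat_le_rank (𝕜 := 𝕜) (E := E) (F := F) (n + 1)).preimage hcont using 1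
  ext x
  simp only [Set.mem_compl_iff, Set.mem_ofPred_eq, Set.preimage_ofPred_eq, not_le, LinearMap.rank,
    ← finrank_eq_rank, Nat.cast_add_one, Cardinal.natCast_add_one_le_iff, Nat.cast_lt]
  rfl

end RankSemicontinuity

theorem LinearMap.finrank_range_comp_comp_le {K V₁ V₂ V₃ V₄ : Type*} [DivisionRing K]
    [AddCommGroup V₁] [Module K V₁] [AddCommGroup V₂] [Module K V₂] [FiniteDimensional K V₂]
    [AddCommGroup V₃] [Module K V₃] [AddCommGroup V₄] [Module K V₄]
    (h : V₁ →ₗ[K] V₂) (f : V₂ →ₗ[K] V₃) (g : V₃ →ₗ[K] V₄) :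
    finrank K (range (g ∘ₗ f ∘ₗ h)) ≤ finrank K (range f) :=
  calc finrank K (range (g ∘ₗ f ∘ₗ h)) ≤ finrank K (range (g ∘ₗ f)) :=
        Submodule.finrank_mono (range_comp_le_range h (g ∘ₗ f))
    _ = finrank K ((range f).map g) := by rw [range_comp]
    _ ≤ finrank K (range f) := Submodule.finrank_map_le _ _

theorem quivExtMap_baseChange {ι A : Type} (s t : A → ι) (d e : ι → ℕ)
    (M : ∀ a : A, Matrix (Fin (d (t a))) (Fin (d (s a))) ℂ)
    (E : ∀ a : A, Matrix (Fin (e (t a))) (Fin (e (s a))) ℂ) (g : ∀ i : ι, GL (Fin (d i)) ℂ) :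
    quivExtMap s t d e (fun a => (↑(g (t a)) : Matrix (Fin (d (t a))) (Fin (d (t a))) ℂ) * M a *
        (↑(g (s a))⁻¹ : Matrix (Fin (d (s a))) (Fin (d (s a))) ℂ)) E =
      LinearMap.piMap (fun a => mulRightLinearMap _ ℂ
          (↑(g (s a))⁻¹ : Matrix (Fin (d (s a))) (Fin (d (s a))) ℂ)) ∘ₗ
        quivExtMap s t d e M E ∘ₗ
        LinearMap.piMap (fun i => mulRightLinearMap _ ℂ (g i : Matrix (Fin (d i)) (Fin (d i)) ℂ)) := by
  ext h a : 2
  simp [quivExtMap, Matrix.sub_mul, Matrix.mul_assoc]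

-- Any norm will do for the semicontinuity lemma; the sup norm induces the product topology.
attribute [local instance] Matrix.normedAddCommGroup Matrix.normedSpace

theorem finrank_range_quivExtMap_le_of_mem_orbit_closure (s t : A → ι) (d e : ι → ℕ)
    (M N : ∀ a : A, Matrix (Fin (d (t a))) (Fin (d (s a))) ℂ)
    (hN : N ∈ closure {Z : ∀ a : A, Matrix (Fin (d (t a))) (Fin (d (s a))) ℂ |
        ∃ g : ∀ i : ι, GL (Fin (d i)) ℂ,
          Z = fun a => (↑(g (t a)) : Matrix (Fin (d (t a))) (Fin (d (t a))) ℂ) * M a *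
            (↑(g (s a))⁻¹ : Matrix (Fin (d (s a))) (Fin (d (s a))) ℂ)})
    (E : ∀ a : A, Matrix (Fin (e (t a))) (Fin (e (s a))) ℂ) :
    finrank ℂ (range (quivExtMap s t d e N E)) ≤ finrank ℂ (range (quivExtMap s t d e M E)) := by
  refine closure_minimal ?_ (isClosed_setOf_finrank_range_le (fun Z => quivExtMap s t d e Z E)
    (fun h => ?_) _) hN
  · rintro _ ⟨g, rfl⟩
    rw [Set.mem_ofPred_eq, quivExtMap_baseChange]
    exact LinearMap.finrank_range_comp_comp_le _ _ _
  · change Continuous fun Z : ∀ a : A, Matrix (Fin (d (t a))) (Fin (d (s a))) ℂ =>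
      fun a => E a * h (s a) - h (t a) * Z a
    fun_prop

/-- If `N` lies in the closure of the base-change orbit of `M`, then
`dim Hom(M,E) ≤ dim Hom(N,E)` and `dim Ext¹(M,E) ≤ dim Ext¹(N,E)` for every
representation `E`. -/
theorem hom_ext_le_of_mem_orbit_closure
    (s t : A → ι) (d : ι → ℕ)
    (M N : ∀ a : A, Matrix (Fin (d (t a))) (Fin (d (s a))) ℂ)
    (hdeg : N ∈ closure {Z : ∀ a : A, Matrix (Fin (d (t a))) (Fin (d (s a))) ℂ |
        ∃ g : ∀ i : ι, GL (Fin (d i)) ℂ,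
          Z = fun a => (↑(g (t a)) : Matrix (Fin (d (t a))) (Fin (d (t a))) ℂ) * M a *
            (↑(g (s a))⁻¹ : Matrix (Fin (d (s a))) (Fin (d (s a))) ℂ)})
    (e : ι → ℕ) (E : ∀ a : A, Matrix (Fin (e (t a))) (Fin (e (s a))) ℂ) :
    quivDimHom s t d e M E ≤ quivDimHom s t d e N E ∧
    quivDimExt s t d e M E ≤ quivDimExt s t d e N E := by
  have hrank := finrank_range_quivExtMap_le_of_mem_orbit_closure s t d e M N hdeg E
  have hkerM := LinearMap.finrank_range_add_finrank_ker (quivExtMap s t d e M E)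
  have hkerN := LinearMap.finrank_range_add_finrank_ker (quivExtMap s t d e N E)
  have hcokerM := (range (quivExtMap s t d e M E)).finrank_quotient_add_finrank
  have hcokerN := (range (quivExtMap s t d e N E)).finrank_quotient_add_finrank
  unfold quivDimHom quivDimExt
  omega
end

section
/- Let Q be a quiver without oriented cycles and M a finite-dimensional representation of Q with dimension vector d. Then the GL•-orbit of M is dense (open) in the representation variety R_d if and only if Ext¹(M,M) = 0. -/
variable {ι A : Type} [Fintype ι] [Fintype A]

/-!
Write `L(X, Y)` for `quivExtMap s t d d X Y`; its kernel is `Hom(X, Y)` and the cokernel of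
`L(M, M)` is `Ext¹(M, M)`. For a continuous family of linear maps the kernel dimension is upper
semicontinuous, and where it does not drop, every kernel vector extends to a continuous local
section of the kernels (solve on a complement with the Gram left inverse).

If `L(M, M)` is onto, then `dim Hom(M, W) ≥ dim End(M)` for every `W` by rank–nullity, and a
section of `Hom(M, W)` through the identity consists of isomorphisms `M ≅ W` for `W` near `M`:
the orbit of a rigid point (one with `L(Z, Z)` onto) is open. Along a line, rigidity is the
non-vanishing of a polynomial, so on the line from any `T` to `M` all but finitely many points
are rigid. They form a connected set on which the open orbits cannot change, and they
accumulate at `T`.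

If the orbit of `M` is dense, semicontinuity again gives `dim Hom(M, W) ≥ dim End(M)` for all
`W`. A section `h τ` of `Hom(M, M + τ c)` with `h 0 = 1` satisfies `L(M, M) (h τ) = -τ c (h τ)`,
so `c = lim c (h τ)` lies in the closed subspace `range L(M, M)`.
-/

open Matrix Module Filter Topology Function Polynomial

section LinearFamilies

variable {𝕜 P E F : Type*} [RCLike 𝕜] [TopologicalSpace P] {p₀ : P}
  [AddCommGroup E] [Module 𝕜 E] [FiniteDimensional 𝕜 E] [TopologicalSpace E]
  [IsTopologicalAddGroup E] [ContinuousSMul 𝕜 E]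
  [AddCommGroup F] [Module 𝕜 F] [FiniteDimensional 𝕜 F] [TopologicalSpace F]
  [IsTopologicalAddGroup F] [ContinuousSMul 𝕜 F] [T2Space F]

open scoped ComplexOrder in
theorem Matrix.exists_continuousAt_leftInverse {m n : Type*} [Fintype m] [Fintype n]
    [DecidableEq n] {B : P → Matrix m n 𝕜} (hB : Continuous B)
    (hinj : Injective (B p₀).mulVec) :
    ∃ L : P → Matrix n m 𝕜, ContinuousAt L p₀ ∧ ∀ᶠ p in 𝓝 p₀, L p * B p = 1 := by
  set N : P → Matrix n n 𝕜 := fun p => (B p)ᴴ * B p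
  have hN : Continuous N := hB.matrix_conjTranspose.matrix_mul hB
  have hN₀ : (N p₀).det ≠ 0 := by
    refine ((isUnit_iff_isUnit_det _).1 (mulVec_injective_iff_isUnit.1 fun v w hvw => ?_)).ne_zero
    rw [← sub_eq_zero, ← mulVec_sub, conjTranspose_mul_self_mulVec_eq_zero, mulVec_sub,
      sub_eq_zero] at hvw
    exact hinj hvw
  refine ⟨fun p => (N p)⁻¹ * (B p)ᴴ, ?_, ?_⟩
  · have hinv : ContinuousAt (fun p => (N p)⁻¹) p₀ := by
      refine (continuousAt_matrix_inv _ ?_).comp hN.continuousAt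
      simpa [Ring.inverse_eq_inv'] using continuousAt_inv₀ hN₀
    have hmul : Continuous fun q : Matrix n n 𝕜 × Matrix n m 𝕜 => q.1 * q.2 :=
      continuous_fst.matrix_mul continuous_snd
    exact hmul.continuousAt.comp (f := fun p => ((N p)⁻¹, (B p)ᴴ))
      (hinv.prodMk hB.matrix_conjTranspose.continuousAt)
  · filter_upwards [hN.matrix_det.continuousAt.eventually_ne hN₀] with p hp
    rw [Matrix.mul_assoc, nonsing_inv_mul _ (isUnit_iff_ne_zero.2 hp)]

theorem LinearMap.exists_continuousAt_leftInverse {g : P → E →ₗ[𝕜] F}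
    (hg : ∀ x, Continuous fun p => g p x) (hinj : Injective (g p₀)) :
    ∃ L : P → F →ₗ[𝕜] E, (∀ y, ContinuousAt (fun q : P × F => L q.1 q.2) (p₀, y)) ∧
      ∀ᶠ p in 𝓝 p₀, ∀ x, L p (g p x) = x := by
  set bE := finBasis 𝕜 E
  set bF := finBasis 𝕜 F
  have hbE : Continuous bE.equivFun.symm := LinearMap.continuous_of_finiteDimensional _
  have hbF : Continuous bF.equivFun := LinearMap.continuous_of_finiteDimensional _
  have hB : Continuous fun p => toMatrix bE bF (g p) :=
    continuous_matrix fun i j => by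
      simpa only [LinearMap.toMatrix_apply, Function.comp_def, Basis.equivFun_apply] using
        ((continuous_apply i).comp hbF).comp (hg (bE j))
  have hB_mulVec (p : P) (x : E) :
      toMatrix bE bF (g p) *ᵥ bE.equivFun x = bF.equivFun (g p x) := by
    simpa using LinearMap.toMatrix_mulVec_repr bE bF (g p) x
  obtain ⟨Lm, hLm, hLmB⟩ := Matrix.exists_continuousAt_leftInverse hB fun v w hvw => by
    rw [← bE.equivFun.apply_symm_apply v, ← bE.equivFun.apply_symm_apply w, hB_mulVec,
      hB_mulVec] at hvw
    exact bE.equivFun.symm.injective (hinj (bF.equivFun.injective hvw))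
  refine ⟨fun p => Matrix.toLin bF bE (Lm p), fun y => ?_, ?_⟩
  · have hL (p : P) (y : F) :
        Matrix.toLin bF bE (Lm p) y = bE.equivFun.symm (Lm p *ᵥ bF.equivFun y) := by
      simp [Matrix.toLin_apply, Basis.equivFun_symm_apply]
    have hmulVec : Continuous fun q : Matrix (Fin (finrank 𝕜 E)) (Fin (finrank 𝕜 F)) 𝕜 ×
        (Fin (finrank 𝕜 F) → 𝕜) => q.1 *ᵥ q.2 :=
      continuous_fst.matrix_mulVec continuous_snd
    simp only [hL]
    exact hbE.continuousAt.comp <| hmulVec.continuousAt.comp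
      (f := fun q : P × F => (Lm q.1, bF.equivFun q.2))
      ((hLm.comp continuousAt_fst).prodMk (hbF.continuousAt.comp continuousAt_snd))
  · filter_upwards [hLmB] with p hp x
    rw [← Matrix.toLin_toMatrix bE bF (g p), ← LinearMap.comp_apply, ← Matrix.toLin_mul,
      hp, Matrix.toLin_one, LinearMap.id_apply]

theorem LinearMap.exists_isCompl_ker_continuousAt_leftInverse {f : P → E →ₗ[𝕜] F}
    (hf : ∀ x, Continuous fun p => f p x) :
    ∃ C : Submodule 𝕜 E, IsCompl (ker (f p₀)) C ∧ ∃ L : P → F →ₗ[𝕜] C,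
      (∀ y, ContinuousAt (fun q : P × F => L q.1 q.2) (p₀, y)) ∧
      ∀ᶠ p in 𝓝 p₀, ∀ x : C, L p (f p x) = x := by
  obtain ⟨C, hC⟩ := (ker (f p₀)).exists_isCompl
  refine ⟨C, hC, exists_continuousAt_leftInverse (g := fun p => f p ∘ₗ C.subtype)
    (fun x => hf x) ?_⟩
  rw [← LinearMap.ker_eq_bot, LinearMap.ker_comp, ← Submodule.disjoint_iff_comap_eq_bot]
  exact hC.disjoint.symm

theorem LinearMap.eventually_finrank_ker_le {f : P → E →ₗ[𝕜] F}
    (hf : ∀ x, Continuous fun p => f p x) :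
    ∀ᶠ p in 𝓝 p₀, finrank 𝕜 (ker (f p)) ≤ finrank 𝕜 (ker (f p₀)) := by
  obtain ⟨C, hC, L, -, hL⟩ := exists_isCompl_ker_continuousAt_leftInverse (p₀ := p₀) hf
  filter_upwards [hL] with p hp
  have hdisj : Disjoint (ker (f p)) C := by
    refine Submodule.disjoint_def.2 fun x hx hxC => ?_
    have := hp ⟨x, hxC⟩
    rw [LinearMap.mem_ker.1 hx, map_zero] at this
    exact congrArg Subtype.val this.symm
  have hsup := Submodule.finrank_sup_add_finrank_inf_eq (ker (f p)) C
  rw [hdisj.eq_bot, finrank_bot] at hsup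
  have := Submodule.finrank_le (ker (f p) ⊔ C)
  have := Submodule.finrank_add_eq_of_isCompl hC
  omega

theorem LinearMap.exists_continuousAt_mem_ker {f : P → E →ₗ[𝕜] F}
    (hf : ∀ x, Continuous fun p => f p x)
    (hdim : ∀ᶠ p in 𝓝 p₀, finrank 𝕜 (ker (f p₀)) ≤ finrank 𝕜 (ker (f p)))
    {k₀ : E} (hk₀ : f p₀ k₀ = 0) :
    ∃ k : P → E, ContinuousAt k p₀ ∧ k p₀ = k₀ ∧ ∀ᶠ p in 𝓝 p₀, f p (k p) = 0 := by
  obtain ⟨C, hC, L, hLc, hL⟩ := exists_isCompl_ker_continuousAt_leftInverse (p₀ := p₀) hf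
  refine ⟨fun p => k₀ - L p (f p k₀), ?_, by simp [hk₀], ?_⟩
  · exact continuousAt_const.sub <| continuous_subtype_val.continuousAt.comp <|
      (hLc (f p₀ k₀)).comp (f := fun p => (p, f p k₀))
        (continuousAt_id.prodMk (hf k₀).continuousAt)
  filter_upwards [hL, hdim] with p hp hdp
  -- `f p` is injective on `C`, so the dimension bound forces it to have the range of `f p`
  have hrange : range (f p ∘ₗ C.subtype) = range (f p) := by
    refine Submodule.eq_of_le_of_finrank_le (range_comp_le_range _ _) ?_
    have := finrank_range_add_finrank_ker (f p)
    have := Submodule.finrank_add_eq_of_isCompl hC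
    rw [finrank_range_of_inj (f := f p ∘ₗ C.subtype) fun x y hxy => by
      rw [← hp x, ← hp y]; exact congrArg (L p) hxy]
    omega
  obtain ⟨c, hc⟩ : f p k₀ ∈ range (f p ∘ₗ C.subtype) := hrange ▸ mem_range_self _ _
  simp only [map_sub, ← hc, comp_apply, Submodule.coe_subtype, hp, sub_self]

end LinearFamilies

theorem Matrix.finite_setOf_det_add_smul_eq_zero {K n : Type*} [Field K] [Fintype n]
    [DecidableEq n] (M N : Matrix n n K) {τ₀ : K} (h : (M + τ₀ • N).det ≠ 0) :
    {τ : K | (M + τ • N).det = 0}.Finite := by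
  set q : K[X] := det ((X : K[X]) • N.map C + M.map C)
  have heval (τ : K) : q.eval τ = (M + τ • N).det := by
    rw [← coe_evalRingHom, RingHom.map_det]
    congr 1
    ext i j
    simp [add_comm, mul_comm _ τ]
  have hq : q ≠ 0 := fun hq => h (by rw [← heval, hq, eval_zero])
  exact (finite_setOfPred_isRoot hq).subset fun τ hτ => show q.IsRoot τ from (heval τ).trans hτ

theorem LinearMap.finite_setOf_not_surjective_add_smul {K V W : Type*} [Field K]
    [AddCommGroup V] [Module K V] [AddCommGroup W] [Module K W] [FiniteDimensional K W]
    (f g : V →ₗ[K] W) {τ₀ : K} (h : Surjective (f + τ₀ • g)) :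
    {τ : K | ¬ Surjective (f + τ • g)}.Finite := by
  obtain ⟨S, hS⟩ := (f + τ₀ • g).exists_rightInverse_of_surjective (range_eq_top.2 h)
  set b := finBasis K W
  have hmat (τ : K) : toMatrix b b ((f + τ • g) ∘ₗ S) =
      toMatrix b b (f ∘ₗ S) + τ • toMatrix b b (g ∘ₗ S) := by
    rw [add_comp, smul_comp, map_add, map_smul]
  refine (Matrix.finite_setOf_det_add_smul_eq_zero (toMatrix b b (f ∘ₗ S))
    (toMatrix b b (g ∘ₗ S)) (τ₀ := τ₀) ?_).subset fun τ hτ => ?_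
  · rw [← hmat, hS, toMatrix_id, det_one]
    exact one_ne_zero
  · by_contra hdet
    rw [Set.notMem_ofPred_iff, ← hmat, det_toMatrix, ← Ne, ← isUnit_iff_ne_zero,
      ← LinearMap.isUnit_iff_isUnit_det, Module.End.isUnit_iff, coe_comp] at hdet
    exact hτ hdet.surjective.of_comp

theorem LinearMap.finrank_ker_le_of_surjective {K V W : Type*} [Field K]
    [AddCommGroup V] [Module K V] [FiniteDimensional K V] [AddCommGroup W] [Module K W]
    {f : V →ₗ[K] W} (hf : Surjective f) (g : V →ₗ[K] W) :
    finrank K (ker f) ≤ finrank K (ker g) := by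
  have : FiniteDimensional K W := Module.Finite.of_surjective f hf
  have hf' := finrank_range_add_finrank_ker f
  have := finrank_range_add_finrank_ker g
  have := Submodule.finrank_le (range g)
  rw [range_eq_top.2 hf, finrank_top] at hf'
  omega

section BaseChange

omit [Fintype ι] [Fintype A]

abbrev QuivRep (s t : A → ι) (d : ι → ℕ) : Type :=
  ∀ a : A, Matrix (Fin (d (t a))) (Fin (d (s a))) ℂ

abbrev QuivEnd (d : ι → ℕ) : Type := ∀ i : ι, Matrix (Fin (d i)) (Fin (d i)) ℂ

variable {s t : A → ι} {d : ι → ℕ}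

def quivAct (g : ∀ i, GL (Fin (d i)) ℂ) (M : QuivRep s t d) : QuivRep s t d :=
  fun a => (↑(g (t a)) : Matrix (Fin (d (t a))) (Fin (d (t a))) ℂ) * M a *
    (↑(g (s a))⁻¹ : Matrix (Fin (d (s a))) (Fin (d (s a))) ℂ)

def quivOrbit (M : QuivRep s t d) : Set (QuivRep s t d) :=
  {Z | ∃ g : ∀ i, GL (Fin (d i)) ℂ, Z = quivAct g M}

theorem quivAct_one (M : QuivRep s t d) : quivAct 1 M = M := by
  funext a
  simp [quivAct]

theorem quivAct_mul (g h : ∀ i, GL (Fin (d i)) ℂ) (M : QuivRep s t d) :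
    quivAct g (quivAct h M) = quivAct (g * h) M := by
  funext a
  simp [quivAct, Matrix.mul_assoc]

theorem mem_quivOrbit_self (M : QuivRep s t d) : M ∈ quivOrbit M :=
  ⟨1, (quivAct_one M).symm⟩

theorem quivOrbit_eq_of_mem {M Z : QuivRep s t d} (hZ : Z ∈ quivOrbit M) :
    quivOrbit Z = quivOrbit M := by
  obtain ⟨g, rfl⟩ := hZ
  ext W
  constructor
  · rintro ⟨h, rfl⟩
    exact ⟨h * g, quivAct_mul h g M⟩
  · rintro ⟨h, rfl⟩
    refine ⟨h * g⁻¹, ?_⟩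
    rw [quivAct_mul, mul_assoc, inv_mul_cancel, mul_one]

theorem quivExtMap_apply (X Y : QuivRep s t d) (h : QuivEnd d) (a : A) :
    quivExtMap s t d d X Y h a = Y a * h (s a) - h (t a) * X a := rfl

theorem mem_quivOrbit_of_isUnit {V W : QuivRep s t d} {h : QuivEnd d} (hh : ∀ i, IsUnit (h i))
    (hVW : quivExtMap s t d d V W h = 0) : W ∈ quivOrbit V := by
  refine ⟨fun i => (hh i).unit, funext fun a => ?_⟩
  have hcomm : W a * h (s a) = h (t a) * V a := sub_eq_zero.1 (congrFun hVW a)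
  simp only [quivAct, IsUnit.unit_spec]
  rw [← hcomm, Matrix.mul_assoc, (hh (s a)).mul_val_inv, Matrix.mul_one]

theorem continuous_quivExtMap_apply (X : QuivRep s t d) (h : QuivEnd d) :
    Continuous fun Y : QuivRep s t d => quivExtMap s t d d X Y h :=
  continuous_pi fun a => ((continuous_apply a).matrix_mul continuous_const).sub continuous_const

theorem quivExtMap_self_one (V : QuivRep s t d) : quivExtMap s t d d V V 1 = 0 :=
  funext fun a => by simp [quivExtMap_apply]

theorem quivExtMap_self_add_smul (T N : QuivRep s t d) (τ : ℂ) :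
    quivExtMap s t d d (T + τ • N) (T + τ • N) =
      quivExtMap s t d d T T + τ • quivExtMap s t d d N N := by
  ext h a : 2
  simp only [quivExtMap_apply, LinearMap.add_apply, LinearMap.smul_apply, Pi.add_apply,
    Pi.smul_apply, Matrix.add_mul, Matrix.mul_add, Matrix.smul_mul, Matrix.mul_smul, smul_sub]
  abel

end BaseChange

section Quiver

variable {s t : A → ι} {d : ι → ℕ}

omit [Fintype A] in
theorem finrank_ker_le_of_mem_quivOrbit {M Z : QuivRep s t d} (hZ : Z ∈ quivOrbit M) :
    finrank ℂ (LinearMap.ker (quivExtMap s t d d M M)) ≤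
      finrank ℂ (LinearMap.ker (quivExtMap s t d d M Z)) := by
  obtain ⟨g, rfl⟩ := hZ
  set e : QuivEnd d ≃ₗ[ℂ] QuivEnd d :=
    LinearEquiv.piCongrRight fun i => Units.mulLeftLinearEquiv ℂ _ (g i)
  have hle : (LinearMap.ker (quivExtMap s t d d M M)).map e.toLinearMap ≤
      LinearMap.ker (quivExtMap s t d d M (quivAct g M)) := by
    rintro _ ⟨h, hh, rfl⟩
    rw [SetLike.mem_coe, LinearMap.mem_ker] at hh
    funext a
    have := congrFun hh a
    simp only [quivExtMap_apply, Pi.zero_apply] at this ⊢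
    simp only [e, LinearEquiv.coe_coe, LinearEquiv.piCongrRight_apply,
      Units.mulLeftLinearEquiv_apply, quivAct, Matrix.mul_assoc, Units.inv_mul_cancel_left]
    rw [← Matrix.mul_sub, this, Matrix.mul_zero]
  exact (e.finrank_map_eq _).symm.le.trans (Submodule.finrank_mono hle)

theorem quivOrbit_mem_nhds {V : QuivRep s t d} (hV : Surjective (quivExtMap s t d d V V)) :
    quivOrbit V ∈ 𝓝 V := by
  obtain ⟨k, hkc, hk1, hk⟩ := LinearMap.exists_continuousAt_mem_ker (p₀ := V)
    (continuous_quivExtMap_apply V)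
    (Eventually.of_forall fun W => LinearMap.finrank_ker_le_of_surjective hV _)
    (quivExtMap_self_one V)
  have hunit : ∀ᶠ W in 𝓝 V, ∀ i, IsUnit (k W i) := by
    refine eventually_all.2 fun i => ?_
    have hdet : Continuous fun h : QuivEnd d => (h i).det := (continuous_apply i).matrix_det
    filter_upwards [(hdet.continuousAt.comp hkc).eventually_ne
      (by simp [hk1] : (k V i).det ≠ 0)] with W hW
    exact (isUnit_iff_isUnit_det _).2 (isUnit_iff_ne_zero.2 hW)
  filter_upwards [hk, hunit] with W hW hWu
  exact mem_quivOrbit_of_isUnit hWu hW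

omit [Fintype ι] in
theorem finite_setOf_not_surjective_quivExtMap_line {M : QuivRep s t d}
    (hM : Surjective (quivExtMap s t d d M M)) (T : QuivRep s t d) :
    {τ : ℂ | ¬ Surjective (quivExtMap s t d d (T + τ • (M - T)) (T + τ • (M - T)))}.Finite := by
  simp only [quivExtMap_self_add_smul]
  refine LinearMap.finite_setOf_not_surjective_add_smul _ _ (τ₀ := 1) ?_
  rwa [← quivExtMap_self_add_smul, one_smul, add_sub_cancel]

theorem dense_quivOrbit_of_surjective {M : QuivRep s t d}
    (hM : Surjective (quivExtMap s t d d M M)) : Dense (quivOrbit M) := by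
  refine dense_iff_inter_open.2 fun U hU ⟨T, hT⟩ => ?_
  set ℓ : ℂ → QuivRep s t d := fun τ => T + τ • (M - T)
  have hℓ : Continuous ℓ := continuous_const.add (continuous_id.smul continuous_const)
  set Λ := {τ : ℂ | Surjective (quivExtMap s t d d (ℓ τ) (ℓ τ))}
  have hΛ : Λᶜ.Countable := (finite_setOf_not_surjective_quivExtMap_line hM T).countable
  have hΛconn : IsPreconnected Λ := by
    simpa using (hΛ.isPathConnected_compl_of_one_lt_rank (by
      rw [Complex.rank_real_complex]; norm_num)).isConnected.isPreconnected
  have hℓ1 : ℓ 1 = M := by simp [ℓ]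
  have h1 : (1 : ℂ) ∈ Λ := by simpa [Λ, hℓ1] using hM
  -- the orbits of rigid points are open, so they are constant along the connected set `Λ`
  have hΛM : ∀ τ ∈ Λ, ℓ τ ∈ quivOrbit M := by
    intro τ hτ
    have : quivOrbit (ℓ τ) = quivOrbit (ℓ 1) := by
      refine hΛconn.induction₂ (fun x y => quivOrbit (ℓ x) = quivOrbit (ℓ y)) (fun x hx => ?_)
        (fun _ _ _ _ _ _ => Eq.trans) (fun _ _ _ _ => Eq.symm) hτ h1
      filter_upwards [nhdsWithin_le_nhds
        (hℓ.continuousAt.preimage_mem_nhds (quivOrbit_mem_nhds hx))] with y hy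
      exact (quivOrbit_eq_of_mem hy).symm
    rw [hℓ1] at this
    exact this ▸ mem_quivOrbit_self _
  obtain ⟨τ, hτU, hτΛ⟩ := (by simpa using hΛ.dense_compl ℂ : Dense Λ).inter_open_nonempty
    (ℓ ⁻¹' U) (hU.preimage hℓ) ⟨0, by simpa [ℓ] using hT⟩
  exact ⟨ℓ τ, hτU, hΛM τ hτΛ⟩

theorem finrank_ker_le_of_dense_quivOrbit {M : QuivRep s t d} (hM : Dense (quivOrbit M))
    (W : QuivRep s t d) :
    finrank ℂ (LinearMap.ker (quivExtMap s t d d M M)) ≤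
      finrank ℂ (LinearMap.ker (quivExtMap s t d d M W)) := by
  obtain ⟨Z, hZW, hZ⟩ := mem_closure_iff_nhds.1 (hM W) _
    (LinearMap.eventually_finrank_ker_le (continuous_quivExtMap_apply M))
  exact (finrank_ker_le_of_mem_quivOrbit hZ).trans hZW

theorem surjective_of_dense_quivOrbit {M : QuivRep s t d} (hM : Dense (quivOrbit M)) :
    Surjective (quivExtMap s t d d M M) := by
  rw [← LinearMap.range_eq_top, Submodule.eq_top_iff']
  intro c
  obtain ⟨k, hkc, hk0, hk⟩ := LinearMap.exists_continuousAt_mem_ker (p₀ := (0 : ℂ))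
    (f := fun τ => quivExtMap s t d d M (M + τ • c))
    (fun h => (continuous_quivExtMap_apply M h).comp
      (continuous_const.add (continuous_id.smul continuous_const)))
    (Eventually.of_forall fun τ => by
      rw [zero_smul, add_zero]; exact finrank_ker_le_of_dense_quivOrbit hM (M + τ • c))
    (by simpa using quivExtMap_self_one M)
  set R : QuivEnd d → QuivRep s t d := fun h a => c a * h (s a)
  have hR : Continuous R :=
    continuous_pi fun a => continuous_const.matrix_mul (continuous_apply (s a))
  have hsplit (τ : ℂ) (h : QuivEnd d) :
      quivExtMap s t d d M (M + τ • c) h = quivExtMap s t d d M M h + τ • R h := by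
    funext a
    simp only [quivExtMap_apply, Pi.add_apply, Pi.smul_apply, Matrix.add_mul, Matrix.smul_mul,
      R]
    abel
  have hmem : ∀ᶠ τ in 𝓝[≠] (0 : ℂ), R (k τ) ∈ LinearMap.range (quivExtMap s t d d M M) := by
    filter_upwards [nhdsWithin_le_nhds hk, self_mem_nhdsWithin] with τ hτ hτ0
    refine ⟨(-τ⁻¹) • k τ, ?_⟩
    rw [map_smul, eq_neg_of_add_eq_zero_left ((hsplit τ (k τ)).symm.trans hτ), smul_neg,
      smul_smul, neg_mul, inv_mul_cancel₀ hτ0, neg_smul, one_smul, neg_neg]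
  have hlim : Tendsto (fun τ => R (k τ)) (𝓝[≠] 0) (𝓝 c) := by
    have : R (k 0) = c := by
      funext a
      simp [R, hk0]
    exact this ▸ (hR.continuousAt.comp hkc).tendsto.mono_left nhdsWithin_le_nhds
  exact (Submodule.closed_of_finiteDimensional _).mem_of_tendsto hlim hmem

omit [Fintype ι] in
theorem quivDimExt_eq_zero_iff (M : QuivRep s t d) :
    quivDimExt s t d d M M = 0 ↔ Surjective (quivExtMap s t d d M M) := by
  rw [quivDimExt, Module.finrank_zero_iff, Submodule.Quotient.subsingleton_iff,
    LinearMap.range_eq_top]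

end Quiver

theorem orbit_dense_iff_ext_self_zero_general
    (s t : A → ι)
    (d : ι → ℕ)
    (M : ∀ a : A, Matrix (Fin (d (t a))) (Fin (d (s a))) ℂ) :
    Dense {Z : ∀ a : A, Matrix (Fin (d (t a))) (Fin (d (s a))) ℂ |
        ∃ g : ∀ i : ι, GL (Fin (d i)) ℂ,
          Z = fun a => (↑(g (t a)) : Matrix (Fin (d (t a))) (Fin (d (t a))) ℂ) * M a *
            (↑(g (s a))⁻¹ : Matrix (Fin (d (s a))) (Fin (d (s a))) ℂ)} ↔
      quivDimExt s t d d M M = 0 := by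
  rw [quivDimExt_eq_zero_iff]
  exact ⟨surjective_of_dense_quivOrbit, dense_quivOrbit_of_surjective⟩

/-- The orbit of `M` is dense in the representation variety iff `Ext¹(M,M) = 0`. -/
theorem orbit_dense_iff_ext_self_zero
    (s t : A → ι)
    (hacyclic : ∀ i : ι, ¬ Relation.TransGen (fun i j : ι => ∃ a : A, s a = i ∧ t a = j) i i)
    (d : ι → ℕ)
    (M : ∀ a : A, Matrix (Fin (d (t a))) (Fin (d (s a))) ℂ) :
    Dense {Z : ∀ a : A, Matrix (Fin (d (t a))) (Fin (d (s a))) ℂ |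
        ∃ g : ∀ i : ι, GL (Fin (d i)) ℂ,
          Z = fun a => (↑(g (t a)) : Matrix (Fin (d (t a))) (Fin (d (t a))) ℂ) * M a *
            (↑(g (s a))⁻¹ : Matrix (Fin (d (s a))) (Fin (d (s a))) ℂ)} ↔
      quivDimExt s t d d M M = 0 :=
  orbit_dense_iff_ext_self_zero_general s t d M
end

section
/- Let (A,σ) be a symmetric quiver algebra and let M, N be two ε-representations on the same ε-quadratic space (V,⟨-,-⟩). Then M and N are isomorphic as ε-representations (i.e., conjugate under the graded isometry group) if and only if they are isomorphic as A-representations (i.e., conjugate under GL•(V)). -/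
/-!
An isomorphism `θ` of representations pulls `B` back to `B (T ·) ·` for an operator `T`
(`T = θ† θ` in Hilbert-space terms). `T` is invertible and `B`-self-adjoint, and it commutes with
the component projections and with the arrow maps of `f`: these families are closed under
`B`-adjoints (the adjoint of the projection onto `M i` is the projection onto `M (σv i)`, that of
arrow `a` is minus arrow `σa a`), and `θ` intertwines each family and its adjoints with those of
`g`. Over `ℂ` an invertible operator has a square root `S` that is a polynomial in it, so `S`
inherits all these properties, and `θ S⁻¹`, the unitary factor of the polar decomposition of `θ`,
is an isometric isomorphism of representations.
-/

open Polynomial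

theorem Polynomial.exists_isCoprime_dvd_sq_sub_X_pow {K : Type*} [Field K] [IsAlgClosed K]
    {p : K[X]} (hp : p ≠ 0) (h0 : ¬ p.IsRoot 0) :
    ∃ q : K[X], IsCoprime q p ∧ p ∣ (q ^ 2 - X) ^ p.natDegree := by
  classical
  choose r hr using fun z : K => IsAlgClosed.exists_pow_nat_eq z two_pos
  set q := Lagrange.interpolate p.roots.toFinset id r
  have hq : ∀ z ∈ p.roots, q.eval z = r z := fun z hz =>
    Lagrange.eval_interpolate_at_node (v := id) r (Set.injOn_id _) (Multiset.mem_toFinset.mpr hz)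
  refine ⟨q, (isCoprime_iff_aeval_ne_zero_of_isAlgClosed (k := K) K q p).mpr fun z => ?_, ?_⟩
  · by_cases hz : z ∈ p.roots
    · left
      rw [coe_aeval_eq_eval, hq z hz]
      rintro hrz
      apply h0
      rw [← hr z, hrz, zero_pow two_ne_zero] at hz
      exact (mem_roots hp).mp hz
    · right
      rw [coe_aeval_eq_eval]
      exact fun h => hz ((mem_roots hp).mpr h)
  · have hfactor : ∀ z ∈ p.roots, X - C z ∣ q ^ 2 - X := fun z hz => by
      rw [dvd_iff_isRoot]
      simp [hq z hz, hr z]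
    calc p = C p.leadingCoeff * (p.roots.map (X - C ·)).prod :=
          (IsAlgClosed.splits p).eq_prod_roots
      _ ∣ (p.roots.map fun _ => q ^ 2 - X).prod :=
        (isUnit_C.mpr (leadingCoeff_ne_zero.mpr hp).isUnit).mul_left_dvd.mpr
          (Multiset.prod_dvd_prod_of_dvd _ _ hfactor)
      _ = (q ^ 2 - X) ^ p.roots.card := by rw [Multiset.map_const', Multiset.prod_replicate]
      _ ∣ (q ^ 2 - X) ^ p.natDegree := pow_dvd_pow _ (card_roots' p)

theorem minpoly.not_isRoot_zero_of_isUnit {K A : Type*} [Field K] [Ring A] [Algebra K A]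
    {x : A} (hx : IsIntegral K x) (hu : IsUnit x) : ¬ (minpoly K x).IsRoot 0 := by
  intro h0
  obtain ⟨r, hr⟩ := X_dvd_iff.mpr ((coeff_zero_eq_eval_zero _).trans h0)
  have hr0 : r ≠ 0 := by rintro rfl; exact minpoly.ne_zero hx (by simpa using hr)
  have hxr : Polynomial.aeval x r = 0 := by
    simpa [hr, hu.mul_right_eq_zero] using minpoly.aeval K x
  have := natDegree_le_of_dvd (minpoly.dvd K x hxr) hr0
  rw [hr, natDegree_X_mul hr0] at this
  omega

theorem exists_mem_adjoin_sq_eq_of_isUnit {K A : Type*} [Field K] [IsAlgClosed K]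
    [NeZero (2 : K)] [Ring A] [Algebra K A] {x : A} (hx : IsIntegral K x) (hu : IsUnit x) :
    ∃ y ∈ Algebra.adjoin K {x}, y ^ 2 = x := by
  nontriviality A
  obtain ⟨q, hcop, hdvd⟩ := exists_isCoprime_dvd_sq_sub_X_pow (minpoly.ne_zero hx)
    (minpoly.not_isRoot_zero_of_isUnit hx hu)
  let x' : Algebra.adjoin K {x} := ⟨x, Algebra.self_mem_adjoin_singleton K x⟩
  have haeval : ∀ f : K[X], (aeval x' f : A) = aeval x f := fun f => aeval_subalgebra_coe f _ x'
  -- `q(x)` is a unit and a square root of `x` up to a nilpotent, so Newton's method for `Y² - x`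
  -- converges in the commutative ring `K[x]`.
  let P : (Algebra.adjoin K {x})[X] := X ^ 2 - C x'
  have hnil : IsNilpotent (aeval (aeval x' q) P) := by
    refine ⟨(minpoly K x).natDegree, Subtype.ext ?_⟩
    have : aeval (aeval x' q) P = aeval x' (q ^ 2 - X) := by simp [P]
    rw [this, ← map_pow, haeval, ZeroMemClass.coe_zero]
    exact (minpoly.dvd_iff).mp hdvd
  have hunit : IsUnit (aeval (aeval x' q) (derivative P)) := by
    obtain ⟨a, b, hab⟩ := hcop
    have hq : aeval x' a * aeval x' q = 1 := by
      apply Subtype.ext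
      simpa [haeval, minpoly.aeval] using congrArg (aeval x) hab
    have h2 : IsUnit (2 : Algebra.adjoin K {x}) := by
      simpa only [map_ofNat] using
        (IsUnit.mk0 (2 : K) two_ne_zero).map (algebraMap K (Algebra.adjoin K {x}))
    simpa [P, one_add_one_eq_two] using h2.mul (IsUnit.of_mul_eq_one_right _ hq)
  obtain ⟨r, -, hr⟩ := existsUnique_nilpotent_sub_and_aeval_eq_zero hnil hunit |>.exists
  refine ⟨r, r.2, ?_⟩
  simpa [P, sub_eq_zero] using congrArg Subtype.val hr

theorem LinearMap.IsSelfAdjoint.of_mem_adjoin {R M : Type*} [CommRing R] [AddCommGroup M]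
    [Module R M] {B : LinearMap.BilinForm R M} {T S : Module.End R M} (hT : B.IsSelfAdjoint T)
    (hS : S ∈ Algebra.adjoin R {T}) : B.IsSelfAdjoint S := by
  induction hS using Algebra.adjoin_induction with
  | mem x hx => rwa [Set.mem_singleton_iff.mp hx]
  | algebraMap r =>
    rw [Algebra.algebraMap_eq_smul_one]
    exact isAdjointPair_one.smul r
  | add y z _ _ hy hz => exact hy.add hz
  | mul y z hy' hz' hy hz =>
    have hyz : Commute y z := Algebra.commute_of_mem_adjoin_singleton_of_commute hz'
      (Algebra.commute_of_mem_adjoin_self hy').symm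
    simpa only [LinearMap.IsSelfAdjoint, hyz.eq] using hy.mul hz

namespace LinearMap.BilinForm

section CommRing

variable {R M : Type*} [CommRing R] [AddCommGroup M] [Module R M] {B : LinearMap.BilinForm R M}
  {T Θ : Module.End R M}

theorem commute_of_apply_eq (hT : ∀ x y, B (T x) y = B (Θ x) (Θ y)) (hB : B.SeparatingLeft)
    {X X' Y Y' : Module.End R M} (hX : IsAdjointPair B B X X') (hY : IsAdjointPair B B Y Y')
    (hΘX : ∀ v, Θ (X v) = Y (Θ v)) (hΘX' : ∀ v, Θ (X' v) = Y' (Θ v)) : Commute X T := by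
  ext x
  refine sub_eq_zero.mp (hB _ fun y => ?_)
  have : B (X (T x)) y = B (T (X x)) y := by
    rw [hX, hT, hΘX', ← hY, ← hΘX, hT]
  simp [this]

theorem isSelfAdjoint_of_apply_eq (hT : ∀ x y, B (T x) y = B (Θ x) (Θ y)) {ε : R}
    (hε : ∀ x y, B x y = ε * B y x) : B.IsSelfAdjoint T := fun x y => by
  rw [hε x, hT, hT, hε (Θ x)]

theorem injective_of_apply_eq (hT : ∀ x y, B (T x) y = B (Θ x) (Θ y)) (hB : B.SeparatingLeft)
    (hΘ : Function.Bijective Θ) : Function.Injective T := by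
  refine (injective_iff_map_eq_zero T).mpr fun x hx => hΘ.1 ?_
  rw [map_zero]
  refine hB _ fun z => ?_
  obtain ⟨y, rfl⟩ := hΘ.2 z
  rw [← hT, hx, map_zero, LinearMap.zero_apply]

end CommRing

theorem exists_isOrthogonal_intertwining {K V : Type*} [Field K] [IsAlgClosed K]
    [NeZero (2 : K)] [AddCommGroup V] [Module K V] [FiniteDimensional K V]
    {B : LinearMap.BilinForm K V}
    (hB : B.SeparatingLeft) {ε : K} (hε : ∀ x y, B x y = ε * B y x)
    {κ : Type*} {X X' Y Y' : κ → Module.End K V}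
    (hX : ∀ k, IsAdjointPair B B (X k) (X' k)) (hY : ∀ k, IsAdjointPair B B (Y k) (Y' k))
    (Θ : V ≃ₗ[K] V) (hΘX : ∀ k v, Θ (X k v) = Y k (Θ v))
    (hΘX' : ∀ k v, Θ (X' k v) = Y' k (Θ v)) :
    ∃ Θ' : V ≃ₗ[K] V, B.IsOrthogonal Θ' ∧ ∀ k v, Θ' (X k v) = Y k (Θ' v) := by
  set T := symmCompOfNondegenerate (B.compl₁₂ Θ.toLinearMap Θ.toLinearMap) B
    (Nondegenerate.ofSeparatingLeft hB)
  have hT : ∀ x y, B (T x) y = B (Θ x) (Θ y) := fun x y =>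
    symmCompOfNondegenerate_left_apply _ _ y x
  have hTinj : Function.Injective T := injective_of_apply_eq hT hB Θ.bijective
  have hTunit : IsUnit T :=
    (Module.End.isUnit_iff T).mpr ⟨hTinj, injective_iff_surjective.mp hTinj⟩
  obtain ⟨S, hST, hS2⟩ :=
    exists_mem_adjoin_sq_eq_of_isUnit (Algebra.IsIntegral.isIntegral (R := K) T) hTunit
  have hSself : B.IsSelfAdjoint S := (isSelfAdjoint_of_apply_eq hT hε).of_mem_adjoin hST
  have hXS : ∀ k, Commute (X k) S := fun k => Algebra.commute_of_mem_adjoin_singleton_of_commute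
    hST (commute_of_apply_eq hT hB (hX k) (hY k) (hΘX k) (hΘX' k))
  have hSinj : Function.Injective S :=
    .of_comp (f := S) (by rwa [← Module.End.coe_mul, ← sq, hS2])
  set Se := LinearEquiv.ofInjectiveEndo S hSinj
  have hSe : ∀ v, S (Se.symm v) = v := Se.apply_symm_apply
  refine ⟨Se.symm.trans Θ, fun x y => ?_, fun k v => ?_⟩
  · calc B (Θ (Se.symm x)) (Θ (Se.symm y)) = B (T (Se.symm x)) (Se.symm y) := (hT _ _).symm
      _ = B (S x) (Se.symm y) := by rw [← hS2, sq, Module.End.mul_apply, hSe]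
      _ = B x y := by rw [hSself, hSe]
  · have : Se.symm (X k v) = X k (Se.symm v) := Se.injective <| by
      rw [Se.apply_symm_apply]
      change _ = S (X k _)
      rw [← Module.End.mul_apply, ← (hXS k).eq, Module.End.mul_apply, hSe]
    rw [LinearEquiv.trans_apply, LinearEquiv.trans_apply, this, hΘX]

end LinearMap.BilinForm

section Pi

variable {K ι : Type*} [CommRing K] [DecidableEq ι] {M : ι → Type*}
  [∀ i, AddCommGroup (M i)] [∀ i, Module K (M i)]

variable (K M) in
def LinearMap.piProj (i : ι) : Module.End K (∀ i, M i) :=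
  LinearMap.single K M i ∘ₗ LinearMap.proj i

open LinearMap (piProj)

theorem LinearEquiv.piCongrRight_piProj (θ : ∀ i, M i ≃ₗ[K] M i) (i : ι) (v : ∀ i, M i) :
    piCongrRight θ (piProj K M i v) = piProj K M i (piCongrRight θ v) := by
  ext j
  rcases eq_or_ne j i with rfl | hj <;> simp [piProj, *]

theorem LinearEquiv.exists_eq_piCongrRight (E : (∀ i, M i) ≃ₗ[K] (∀ i, M i))
    (hE : ∀ i v, E (piProj K M i v) = piProj K M i (E v)) :
    ∃ θ : ∀ i, M i ≃ₗ[K] M i, E = piCongrRight θ := by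
  have hE' : ∀ i v, E.symm (piProj K M i v) = piProj K M i (E.symm v) := fun i v =>
    E.injective (by rw [hE, E.apply_symm_apply, E.apply_symm_apply])
  have hsingle : ∀ F : (∀ i, M i) ≃ₗ[K] (∀ i, M i),
      (∀ i v, F (piProj K M i v) = piProj K M i (F v)) →
      ∀ i x, F (Pi.single i x) = Pi.single i (F (Pi.single i x) i) := fun F hF i x => by
    simpa [piProj] using hF i (Pi.single i x)
  refine ⟨fun i => ofLinearMap
    (LinearMap.proj i ∘ₗ E.toLinearMap ∘ₗ LinearMap.single K M i)
    (LinearMap.proj i ∘ₗ E.symm.toLinearMap ∘ₗ LinearMap.single K M i) ?_ ?_, ?_⟩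
  · ext x
    simp [← hsingle _ hE']
  · ext x
    simp [← hsingle _ hE]
  · ext v j
    simpa [piProj] using (congrFun (hE j v) j).symm

end Pi

namespace QuiverRep

open LinearMap (piProj)

variable {K ι A : Type*} [CommRing K] [DecidableEq ι] {M : ι → Type*}
  [∀ i, AddCommGroup (M i)] [∀ i, Module K (M i)] (s t : A → ι)

def arrowEnd (f : ∀ a, M (s a) →ₗ[K] M (t a)) (a : A) : Module.End K (∀ i, M i) :=
  LinearMap.single K M (t a) ∘ₗ f a ∘ₗ LinearMap.proj (s a)

theorem piCongrRight_arrowEnd_iff (θ : ∀ i, M i ≃ₗ[K] M i)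
    (f g : ∀ a, M (s a) →ₗ[K] M (t a)) :
    (∀ a v, LinearEquiv.piCongrRight θ (arrowEnd s t f a v) =
      arrowEnd s t g a (LinearEquiv.piCongrRight θ v)) ↔
    ∀ a x, θ (t a) (f a x) = g a (θ (s a) x) := by
  refine ⟨fun h a x => ?_, fun h a v => ?_⟩
  · simpa [arrowEnd] using congrFun (h a (Pi.single (s a) x)) (t a)
  · ext j
    rcases eq_or_ne j (t a) with rfl | hj <;> simp [arrowEnd, *]

variable [Fintype ι] {B : LinearMap.BilinForm K (∀ i, M i)} {σv : ι → ι}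

theorem apply_single_left_eq
    (hB : ∀ i j, j ≠ σv i → ∀ (x : M i) (y : M j), B (Pi.single i x) (Pi.single j y) = 0)
    (i : ι) (x : M i) (w : ∀ i, M i) :
    B (Pi.single i x) w = B (Pi.single i x) (Pi.single (σv i) (w (σv i))) := by
  conv_lhs => rw [← Finset.univ_sum_single w]
  rw [map_sum, Finset.sum_eq_single (σv i) (fun j _ hj => hB i j hj x _) (by simp)]

theorem apply_single_right_eq
    (hB : ∀ i j, j ≠ σv i → ∀ (x : M i) (y : M j), B (Pi.single i x) (Pi.single j y) = 0)
    (hσ : Function.Injective σv) {i j : ι} (hij : σv i = j) (v : ∀ i, M i) (y : M j) :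
    B v (Pi.single j y) = B (Pi.single i (v i)) (Pi.single j y) := by
  conv_lhs => rw [← Finset.univ_sum_single v]
  rw [map_sum, LinearMap.sum_apply, Finset.sum_eq_single i
    (fun k _ hk => hB k j (fun h => hk (hσ (h.symm.trans hij.symm))) _ y) (by simp)]

theorem isAdjointPair_piProj
    (hB : ∀ i j, j ≠ σv i → ∀ (x : M i) (y : M j), B (Pi.single i x) (Pi.single j y) = 0)
    (hσ : Function.Injective σv) (i : ι) :
    LinearMap.IsAdjointPair B B (piProj K M i) (piProj K M (σv i)) := fun v w => by
  simp only [piProj, LinearMap.comp_apply, LinearMap.proj_apply, LinearMap.single_apply]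
  rw [apply_single_left_eq hB, apply_single_right_eq hB hσ rfl v]

theorem isAdjointPair_arrowEnd
    (hB : ∀ i j, j ≠ σv i → ∀ (x : M i) (y : M j), B (Pi.single i x) (Pi.single j y) = 0)
    (hσ : Function.Injective σv) {σa : A → A} {f : ∀ a, M (s a) →ₗ[K] M (t a)} {a : A}
    (hs : s (σa a) = σv (t a)) (ht : t (σa a) = σv (s a))
    (hf : ∀ (x : M (s a)) (y : M (s (σa a))),
      B (Pi.single (t a) (f a x)) (Pi.single (s (σa a)) y) +
        B (Pi.single (s a) x) (Pi.single (t (σa a)) (f (σa a) y)) = 0) :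
    LinearMap.IsAdjointPair B B (arrowEnd s t f a) (-arrowEnd s t f (σa a)) := fun v w => by
  simp only [arrowEnd, Pi.neg_apply, LinearMap.comp_apply, LinearMap.proj_apply,
    LinearMap.single_apply, map_neg]
  rw [apply_single_left_eq hB, ← hs, apply_single_right_eq hB hσ ht.symm,
    eq_neg_iff_add_eq_zero]
  exact hf _ _

end QuiverRep

open LinearMap (piProj) in
open QuiverRep in
theorem eps_reps_isomorphic_iff_isomorphic_general
    {ι A : Type} [Fintype ι] [DecidableEq ι]
    (s t : A → ι) (σv : ι → ι) (σa : A → A)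
    (hσv : ∀ i, σv (σv i) = i)
    (hs : ∀ a, s (σa a) = σv (t a)) (ht : ∀ a, t (σa a) = σv (s a))
    (M : ι → Type) [∀ i, AddCommGroup (M i)] [∀ i, Module ℂ (M i)]
    [∀ i, FiniteDimensional ℂ (M i)]
    (ε : ℂ)
    (B : (∀ i, M i) →ₗ[ℂ] (∀ i, M i) →ₗ[ℂ] ℂ)
    (hnondeg : ∀ x, (∀ y, B x y = 0) → x = 0)
    (hepsilon : ∀ x y, B x y = ε * B y x)
    (hcompat : ∀ i j : ι, j ≠ σv i → ∀ (x : M i) (y : M j),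
      B (Pi.single i x) (Pi.single j y) = 0)
    (f g : ∀ a : A, M (s a) →ₗ[ℂ] M (t a))
    (hfrep : ∀ a : A, ∀ (x : M (s a)) (y : M (s (σa a))),
      B (Pi.single (t a) (f a x)) (Pi.single (s (σa a)) y) +
        B (Pi.single (s a) x) (Pi.single (t (σa a)) (f (σa a) y)) = 0)
    (hgrep : ∀ a : A, ∀ (x : M (s a)) (y : M (s (σa a))),
      B (Pi.single (t a) (g a x)) (Pi.single (s (σa a)) y) +
        B (Pi.single (s a) x) (Pi.single (t (σa a)) (g (σa a) y)) = 0) :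
    (∃ θ : ∀ i, M i ≃ₗ[ℂ] M i,
        ∀ a : A, ∀ x : M (s a), θ (t a) (f a x) = g a (θ (s a) x)) ↔
    (∃ θ : ∀ i, M i ≃ₗ[ℂ] M i,
        (∀ a : A, ∀ x : M (s a), θ (t a) (f a x) = g a (θ (s a) x)) ∧
        (∀ x y : ∀ i, M i, B (fun i => θ i (x i)) (fun i => θ i (y i)) = B x y)) := by
  refine ⟨fun ⟨θ, hθ⟩ => ?_, fun ⟨θ, hθ, _⟩ => ⟨θ, hθ⟩⟩
  have hσ : Function.Injective σv := Function.Involutive.injective hσv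
  have hθ' := (piCongrRight_arrowEnd_iff s t θ f g).mpr hθ
  obtain ⟨Θ, hΘB, hΘ⟩ := LinearMap.BilinForm.exists_isOrthogonal_intertwining hnondeg hepsilon
    (X := Sum.elim (piProj ℂ M) (arrowEnd s t f)) (Y := Sum.elim (piProj ℂ M) (arrowEnd s t g))
    (X' := Sum.elim (fun i => piProj ℂ M (σv i)) fun a => -arrowEnd s t f (σa a))
    (Y' := Sum.elim (fun i => piProj ℂ M (σv i)) fun a => -arrowEnd s t g (σa a))
    (Sum.rec (isAdjointPair_piProj hcompat hσ) fun a =>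
      isAdjointPair_arrowEnd s t hcompat hσ (hs a) (ht a) (hfrep a))
    (Sum.rec (isAdjointPair_piProj hcompat hσ) fun a =>
      isAdjointPair_arrowEnd s t hcompat hσ (hs a) (ht a) (hgrep a))
    (LinearEquiv.piCongrRight θ)
    (Sum.rec (LinearEquiv.piCongrRight_piProj θ) hθ')
    (Sum.rec (fun i => LinearEquiv.piCongrRight_piProj θ (σv i)) fun a v => by
      simp [hθ' (σa a)])
  obtain ⟨θ', rfl⟩ := LinearEquiv.exists_eq_piCongrRight Θ fun i => hΘ (.inl i)
  exact ⟨θ', (piCongrRight_arrowEnd_iff s t θ' f g).mp fun a => hΘ (.inr a), hΘB⟩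

theorem eps_reps_isomorphic_iff_isomorphic
    {ι A : Type} [Fintype ι] [Fintype A] [DecidableEq ι]
    (s t : A → ι) (σv : ι → ι) (σa : A → A)
    (hσv : ∀ i, σv (σv i) = i) (hσa : ∀ a, σa (σa a) = a)
    (hs : ∀ a, s (σa a) = σv (t a)) (ht : ∀ a, t (σa a) = σv (s a))
    (M : ι → Type) [∀ i, AddCommGroup (M i)] [∀ i, Module ℂ (M i)]
    [∀ i, FiniteDimensional ℂ (M i)]
    (ε : ℂ) (hε : ε = 1 ∨ ε = -1)
    (B : (∀ i, M i) →ₗ[ℂ] (∀ i, M i) →ₗ[ℂ] ℂ)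
    (hnondeg : ∀ x, (∀ y, B x y = 0) → x = 0)
    (hepsilon : ∀ x y, B x y = ε * B y x)
    (hcompat : ∀ i j : ι, j ≠ σv i → ∀ (x : M i) (y : M j),
      B (Pi.single i x) (Pi.single j y) = 0)
    (f g : ∀ a : A, M (s a) →ₗ[ℂ] M (t a))
    (hfrep : ∀ a : A, ∀ (x : M (s a)) (y : M (s (σa a))),
      B (Pi.single (t a) (f a x)) (Pi.single (s (σa a)) y) +
        B (Pi.single (s a) x) (Pi.single (t (σa a)) (f (σa a) y)) = 0)
    (hgrep : ∀ a : A, ∀ (x : M (s a)) (y : M (s (σa a))),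
      B (Pi.single (t a) (g a x)) (Pi.single (s (σa a)) y) +
        B (Pi.single (s a) x) (Pi.single (t (σa a)) (g (σa a) y)) = 0) :
    (∃ θ : ∀ i, M i ≃ₗ[ℂ] M i,
        ∀ a : A, ∀ x : M (s a), θ (t a) (f a x) = g a (θ (s a) x)) ↔
    (∃ θ : ∀ i, M i ≃ₗ[ℂ] M i,
        (∀ a : A, ∀ x : M (s a), θ (t a) (f a x) = g a (θ (s a) x)) ∧
        (∀ x y : ∀ i, M i, B (fun i => θ i (x i)) (fun i => θ i (y i)) = B x y)) :=
  eps_reps_isomorphic_iff_isomorphic_general s t σv σa hσv hs ht M ε B hnondeg hepsilon hcompat f g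
    hfrep hgrep
end

section
/- Let (A,σ) be a symmetric quiver algebra, M an ε-representation with form Ψ, and ι : L ↪ M an isotropic subrepresentation (ι(L) ⊆ ι(L)^⊥). Then M degenerates symmetrically to L ⊕ ∇L ⊕ (ι(L)^⊥/ι(L)): there is a one-parameter subgroup λ(t) of the graded isometry group G•(V,Ψ) and a point m in the G•(V,Ψ)-orbit of M such that lim_{t→0} λ(t)·m is isomorphic to L ⊕ ∇L ⊕ (ι(L)^⊥/ι(L)). -/
/-!
Choose a graded complement `U'` of `U^⊥` that is isotropic (correct an arbitrary complement by
`c ↦ c - ρ c / 2`, where `ρ c ∈ U` pairs with the complement like `c`), and let `W` be the part of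
`U^⊥` orthogonal to `U'`. Then `V = U ⊕ W ⊕ U'`, and the form only pairs `U` with `U'` and `W` with
itself, so `λ(c)`, acting by `c`, `1`, `c⁻¹` on the three summands, is a graded isometry. Since `X`
preserves the flag `U ⊆ U^⊥ ⊆ V`, conjugating by `λ(c)` multiplies its blocks by nonnegative powers
of `c`, so `λ(c) X λ(c)⁻¹` tends to the block diagonal part `N` of `X`; `N` is an
`ε`-representation because these form a closed set containing the orbit of `X`.
-/

open Filter Topology Matrix

section PairingProjection

variable {𝕜 E F : Type*} [Field 𝕜] [AddCommGroup E] [Module 𝕜 E] [AddCommGroup F] [Module 𝕜 F]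

theorem LinearMap.exists_proj_pairing_eq (β : E →ₗ[𝕜] F →ₗ[𝕜] 𝕜) (P : Submodule 𝕜 E)
    (Q : Submodule 𝕜 F) [FiniteDimensional 𝕜 Q] (hQ : ∀ z ∈ Q, (∀ p ∈ P, β p z = 0) → z = 0) :
    ∃ π : E →ₗ[𝕜] E, (∀ v, π v ∈ P) ∧ ∀ v, ∀ z ∈ Q, β (π v) z = β v z := by
  let f : P →ₗ[𝕜] Q →ₗ[𝕜] 𝕜 := (β.domRestrict P).compl₂ Q.subtype
  have hf : Function.Surjective f := by
    refine LinearMap.flip_injective_iff₂.mp ((injective_iff_map_eq_zero _).mpr fun z hz => ?_)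
    exact Subtype.ext (hQ z z.2 fun p hp => congr($hz ⟨p, hp⟩))
  obtain ⟨g, hg⟩ := f.exists_rightInverse_of_surjective (LinearMap.range_eq_top.mpr hf)
  exact ⟨P.subtype ∘ₗ g ∘ₗ β.compl₂ Q.subtype, fun v => (g _).2,
    fun v z hz => congr($hg (β.compl₂ Q.subtype v) ⟨z, hz⟩)⟩

theorem Submodule.isCompl_map_id_sub {S C : Submodule 𝕜 E} (h : IsCompl S C) (g : E →ₗ[𝕜] E)
    (hg : ∀ v, g v ∈ S) : IsCompl S (C.map (LinearMap.id - g)) := by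
  constructor
  · rw [Submodule.disjoint_def]
    rintro _ hx ⟨c, hc, rfl⟩
    have hcS : c ∈ S := by simpa using S.add_mem hx (hg c)
    simp [(Submodule.disjoint_def.mp h.disjoint) c hcS hc]
  · rw [codisjoint_iff, eq_top_iff, ← h.sup_eq_top]
    refine sup_le le_sup_left fun c hc => ?_
    rw [show c = g c + (LinearMap.id - g : E →ₗ[𝕜] E) c by simp]
    exact Submodule.add_mem_sup (hg c) ⟨c, hc, rfl⟩

theorem completeOrthogonalIdempotents_projection {I : Type*} [Fintype I]
    {P Q : I → Submodule 𝕜 E} (h : ∀ k, IsCompl (P k) (Q k)) (hle : ∀ k l, k ≠ l → P l ≤ Q k)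
    (htop : ⨆ k, P k = ⊤) :
    CompleteOrthogonalIdempotents fun k => (P k).projection (Q k) (h k) where
  idem k := Submodule.isIdempotentElem_projection (h k)
  ortho k l hkl := LinearMap.ext fun x =>
    Submodule.projection_apply_of_mem_right _ (hle k l hkl (Submodule.projection_apply_mem _ x))
  complete := by
    classical
    refine LinearMap.ext fun x => ?_
    rw [LinearMap.sum_apply, Module.End.one_apply]
    refine Submodule.iSup_induction P (motive := fun x => ∑ k, (P k).projection (Q k) (h k) x = x)
      (htop ▸ Submodule.mem_top) (fun l y hy => ?_) (by simp) fun y z hy hz => ?_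
    · rw [Finset.sum_eq_single l
        (fun k _ hkl => Submodule.projection_apply_of_mem_right _ (hle k l hkl hy)) (by simp)]
      exact Submodule.projection_apply_of_mem_left _ hy
    · simp only [map_add, Finset.sum_add_distrib, hy, hz]

end PairingProjection

section WeightAction

variable {𝕜 V V' I : Type*} [Field 𝕜] [AddCommGroup V] [Module 𝕜 V] [AddCommGroup V']
  [Module 𝕜 V'] [Fintype I]

def weightAction (e : I → Module.End 𝕜 V) (w : I → ℤ) (c : 𝕜) : Module.End 𝕜 V :=
  ∑ k, c ^ w k • e k

theorem weightAction_mul {e : I → Module.End 𝕜 V} (he : OrthogonalIdempotents e) (w : I → ℤ)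
    (c c' : 𝕜) : weightAction e w (c * c') = weightAction e w c * weightAction e w c' := by
  classical
  simp [weightAction, Finset.sum_mul_sum, he.mul_eq, mul_zpow, smul_smul, mul_comm]

def weightHom {e : I → Module.End 𝕜 V} (he : CompleteOrthogonalIdempotents e) (w : I → ℤ) :
    𝕜 →* Module.End 𝕜 V where
  toFun := weightAction e w
  map_one' := by simp [weightAction, he.complete]
  map_mul' := weightAction_mul he.toOrthogonalIdempotents w

theorem weightAction_comp_comp_inv (e : I → Module.End 𝕜 V) (e' : I → Module.End 𝕜 V')
    (w : I → ℤ) (X : V →ₗ[𝕜] V') {c : 𝕜} (hc : c ≠ 0) :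
    weightAction e' w c ∘ₗ X ∘ₗ weightAction e w c⁻¹ =
      ∑ k, ∑ l, c ^ (w k - w l) • (e' k ∘ₗ X ∘ₗ e l) := by
  ext x
  simp only [weightAction, LinearMap.comp_apply, LinearMap.sum_apply, LinearMap.smul_apply,
    map_sum, map_smul, Finset.smul_sum, smul_smul]
  rw [Finset.sum_comm]
  refine Finset.sum_congr rfl fun k _ => Finset.sum_congr rfl fun l _ => ?_
  rw [_root_.inv_zpow', ← zpow_add₀ hc, add_comm, sub_eq_add_neg]

theorem weightAction_pairing {e : I → Module.End 𝕜 V} {e' : I → Module.End 𝕜 V'}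
    (he : CompleteOrthogonalIdempotents e) (he' : CompleteOrthogonalIdempotents e')
    {w : I → ℤ} (β : V →ₗ[𝕜] V' →ₗ[𝕜] 𝕜)
    (hβ : ∀ k l, w k + w l ≠ 0 → ∀ x y, β (e k x) (e' l y) = 0) {c : 𝕜} (hc : c ≠ 0)
    (x : V) (y : V') : β (weightAction e w c x) (weightAction e' w c y) = β x y := by
  have hweight : ∀ k l, c ^ w l * (c ^ w k * β (e k x) (e' l y)) = β (e k x) (e' l y) := by
    intro k l
    by_cases h : w k + w l = 0
    · rw [← mul_assoc, ← zpow_add₀ hc, add_comm, h, zpow_zero, one_mul]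
    · rw [hβ k l h, mul_zero, mul_zero]
  have hx : x = ∑ k, e k x := by simpa using congr($he.complete.symm x)
  have hy : y = ∑ l, e' l y := by simpa using congr($he'.complete.symm y)
  calc β (weightAction e w c x) (weightAction e' w c y)
      = ∑ l, ∑ k, c ^ w l * (c ^ w k * β (e k x) (e' l y)) := by
        simp [weightAction, Finset.mul_sum]
    _ = β x y := by
        simp only [hweight]
        conv_rhs => rw [hx, hy]
        simp

theorem tendsto_sum_zpow_smul {𝕜 T : Type*} [Field 𝕜] [TopologicalSpace 𝕜] [ContinuousMul 𝕜]
    [AddCommGroup T] [Module 𝕜 T] [TopologicalSpace T] [ContinuousAdd T] [ContinuousSMul 𝕜 T]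
    {w : I → ℤ} (hw : Function.Injective w) (M : I → I → T)
    (hM : ∀ k l, w k < w l → M k l = 0) :
    Tendsto (fun c : 𝕜 => ∑ k, ∑ l, c ^ (w k - w l) • M k l) (𝓝[≠] 0) (𝓝 (∑ k, M k k)) := by
  classical
  rw [show ∑ k, M k k = ∑ k, ∑ l, if k = l then M k l else 0 by simp]
  refine tendsto_finsetSum _ fun k _ => tendsto_finsetSum _ fun l _ => ?_
  rcases lt_trichotomy (w k) (w l) with h | h | h
  · simp [hM k l h, tendsto_const_nhds]
  · simp [hw h, tendsto_const_nhds]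
  · obtain ⟨n, hn⟩ : ∃ n : ℕ, w k - w l = ((n + 1 : ℕ) : ℤ) := ⟨(w k - w l - 1).toNat, by omega⟩
    have hpow : Tendsto (fun c : 𝕜 => c ^ (n + 1)) (𝓝 0) (𝓝 0) := by
      simpa using (continuous_pow (n + 1)).tendsto (0 : 𝕜)
    simp only [hn, zpow_natCast, if_neg (fun hkl : k = l => h.ne' (congrArg w hkl))]
    simpa using (hpow.smul_const (M k l)).mono_left nhdsWithin_le_nhds

end WeightAction

section Flag

variable {𝕜 V V' : Type*} [Field 𝕜] [AddCommGroup V] [Module 𝕜 V] [AddCommGroup V']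
  [Module 𝕜 V']

def flagWeight : Fin 3 → ℤ := ![1, 0, -1]

theorem flagWeight_injective : Function.Injective flagWeight := by
  decide

def flagCompl (P : Fin 3 → Submodule 𝕜 V) : Fin 3 → Submodule 𝕜 V :=
  ![P 1 ⊔ P 2, P 0 ⊔ P 2, P 0 ⊔ P 1]

variable {P : Fin 3 → Submodule 𝕜 V}

theorem isCompl_flagCompl (h01 : Disjoint (P 0) (P 1)) (h2 : IsCompl (P 0 ⊔ P 1) (P 2))
    (k : Fin 3) : IsCompl (P k) (flagCompl P k) := by
  fin_cases k
  · exact ⟨h01.disjoint_sup_right_of_disjoint_sup_left h2.disjoint,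
      codisjoint_iff.mpr (by simpa [flagCompl, sup_assoc] using h2.sup_eq_top)⟩
  · refine ⟨h01.symm.disjoint_sup_right_of_disjoint_sup_left
      (by simpa [sup_comm] using h2.disjoint), codisjoint_iff.mpr ?_⟩
    show P 1 ⊔ (P 0 ⊔ P 2) = ⊤
    rw [sup_left_comm, ← sup_assoc]
    exact h2.sup_eq_top
  · exact h2.symm

noncomputable def flagProj (h01 : Disjoint (P 0) (P 1)) (h2 : IsCompl (P 0 ⊔ P 1) (P 2))
    (k : Fin 3) : Module.End 𝕜 V :=
  (P k).projection (flagCompl P k) (isCompl_flagCompl h01 h2 k)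

variable (h01 : Disjoint (P 0) (P 1)) (h2 : IsCompl (P 0 ⊔ P 1) (P 2))

theorem completeOrthogonalIdempotents_flagProj :
    CompleteOrthogonalIdempotents (flagProj h01 h2) :=
  completeOrthogonalIdempotents_projection _
    (by intro k l hkl; fin_cases k <;> fin_cases l <;> simp_all [flagCompl])
    (by rw [iSup_fin_three]; exact h2.sup_eq_top)

theorem flagProj_mem (k : Fin 3) (x : V) : flagProj h01 h2 k x ∈ P k :=
  Submodule.projection_apply_mem _ x

theorem flagProj_of_mem {k : Fin 3} {x : V} (hx : x ∈ P k) : flagProj h01 h2 k x = x :=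
  Submodule.projection_apply_of_mem_left _ hx

theorem flagProj_of_mem_flagCompl {k : Fin 3} {x : V} (hx : x ∈ flagCompl P k) :
    flagProj h01 h2 k x = 0 :=
  Submodule.projection_apply_of_mem_right _ hx

theorem sub_flagProj_one_mem {x : V} (hx : x ∈ P 0 ⊔ P 1) : x - flagProj h01 h2 1 x ∈ P 0 := by
  have hsum := congr($((completeOrthogonalIdempotents_flagProj h01 h2).complete) x)
  rw [LinearMap.sum_apply, Fin.sum_univ_three, flagProj_of_mem_flagCompl h01 h2 (k := 2) hx,
    add_zero, Module.End.one_apply] at hsum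
  rw [← eq_sub_of_add_eq hsum]
  exact flagProj_mem h01 h2 0 x

theorem flagProj_comp_comp_eq_zero {P' : Fin 3 → Submodule 𝕜 V'} (h01' : Disjoint (P' 0) (P' 1))
    (h2' : IsCompl (P' 0 ⊔ P' 1) (P' 2)) (f : V →ₗ[𝕜] V') (hf0 : ∀ x ∈ P 0, f x ∈ P' 0)
    (hf1 : ∀ x ∈ P 0 ⊔ P 1, f x ∈ P' 0 ⊔ P' 1) {k l : Fin 3}
    (hkl : flagWeight k < flagWeight l) :
    flagProj h01' h2' k ∘ₗ f ∘ₗ flagProj h01 h2 l = 0 := by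
  ext1 x
  refine flagProj_of_mem_flagCompl h01' h2' ?_
  fin_cases k <;> fin_cases l <;> (try exact absurd hkl (by decide))
  · exact Submodule.mem_sup_left (hf0 _ (flagProj_mem h01 h2 0 x))
  · exact Submodule.mem_sup_left (hf0 _ (flagProj_mem h01 h2 0 x))
  · exact hf1 _ (Submodule.mem_sup_right (flagProj_mem h01 h2 1 x))

end Flag

section GradedForm

variable {𝕜 ι : Type*} [Field 𝕜] [DecidableEq ι] {E : ι → Type*} [∀ i, AddCommGroup (E i)]
  [∀ i, Module 𝕜 (E i)] (B : (∀ i, E i) →ₗ[𝕜] (∀ i, E i) →ₗ[𝕜] 𝕜)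

def gradedPairing (i j : ι) : E i →ₗ[𝕜] E j →ₗ[𝕜] 𝕜 :=
  (B ∘ₗ LinearMap.single 𝕜 E i).compl₂ (LinearMap.single 𝕜 E j)

@[simp]
theorem gradedPairing_apply (i j : ι) (x : E i) (y : E j) :
    gradedPairing B i j x y = B (Pi.single i x) (Pi.single j y) :=
  rfl

def gradedOrthogonal (P : ∀ i, Submodule 𝕜 (E i)) (i : ι) : Submodule 𝕜 (E i) :=
  ⨅ (j) (y ∈ P j), LinearMap.ker ((gradedPairing B i j).flip y)

variable {B}

theorem mem_gradedOrthogonal {P : ∀ i, Submodule 𝕜 (E i)} {i : ι} {x : E i} :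
    x ∈ gradedOrthogonal B P i ↔ ∀ j, ∀ y ∈ P j, B (Pi.single i x) (Pi.single j y) = 0 := by
  simp [gradedOrthogonal]

theorem pairing_eq_zero_of_mem_gradedOrthogonal {ε : 𝕜} (hB : ∀ x y, B x y = ε * B y x)
    {P : ∀ i, Submodule 𝕜 (E i)} {i j : ι} {x : E i} (hx : x ∈ P i) {y : E j}
    (hy : y ∈ gradedOrthogonal B P j) : B (Pi.single i x) (Pi.single j y) = 0 := by
  rw [hB, mem_gradedOrthogonal.mp hy i x hx, mul_zero]

variable {σ : ι → ι}

variable (B σ) in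
def PairsAlong : Prop :=
  ∀ i j, j ≠ σ i → ∀ (x : E i) (y : E j), B (Pi.single i x) (Pi.single j y) = 0

theorem mem_gradedOrthogonal_of_pairing_eq_zero (hσB : PairsAlong B σ)
    {P : ∀ i, Submodule 𝕜 (E i)} {i : ι} {x : E i}
    (hx : ∀ y ∈ P (σ i), B (Pi.single i x) (Pi.single (σ i) y) = 0) :
    x ∈ gradedOrthogonal B P i := by
  refine mem_gradedOrthogonal.mpr fun j y hy => ?_
  by_cases hj : j = σ i
  · subst hj
    exact hx y hy
  · exact hσB i j hj x y

theorem exists_proj_pairing_eq_of_disjoint [∀ i, FiniteDimensional 𝕜 (E i)]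
    (hσ : Function.Involutive σ) (hσB : PairsAlong B σ) {ε : 𝕜} (hB : ∀ x y, B x y = ε * B y x)
    {U R : ∀ i, Submodule 𝕜 (E i)}
    (hR : ∀ i, Disjoint (gradedOrthogonal B U i) (R i)) (i : ι) :
    ∃ π : E i →ₗ[𝕜] E i, (∀ v, π v ∈ U i) ∧ ∀ v j, ∀ z ∈ R j,
      B (Pi.single i (π v)) (Pi.single j z) = B (Pi.single i v) (Pi.single j z) := by
  have hnondeg : ∀ z ∈ R (σ i), (∀ u ∈ U i, gradedPairing B i (σ i) u z = 0) → z = 0 := by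
    refine fun z hz hUz => Submodule.disjoint_def.mp (hR (σ i)) z ?_ hz
    refine mem_gradedOrthogonal.mpr fun j y hy => ?_
    by_cases hj : j = i
    · subst hj
      rw [hB, ← gradedPairing_apply, hUz y hy, mul_zero]
    · exact hσB (σ i) j (by rwa [hσ i]) z y
  obtain ⟨π, hπU, hπ⟩ := (gradedPairing B i (σ i)).exists_proj_pairing_eq (U i) (R (σ i)) hnondeg
  refine ⟨π, hπU, fun v j z hz => ?_⟩
  by_cases hj : j = σ i
  · subst hj
    exact hπ v z hz
  · rw [hσB i j hj, hσB i j hj]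

theorem exists_isotropic_isCompl_gradedOrthogonal [∀ i, FiniteDimensional 𝕜 (E i)]
    (h2 : (2 : 𝕜) ≠ 0) (hσ : Function.Involutive σ) (hσB : PairsAlong B σ) {ε : 𝕜}
    (hε : ε * ε = 1) (hB : ∀ x y, B x y = ε * B y x) {U : ∀ i, Submodule 𝕜 (E i)}
    (hU : ∀ i, U i ≤ gradedOrthogonal B U i) :
    ∃ U' : ∀ i, Submodule 𝕜 (E i), (∀ i, IsCompl (gradedOrthogonal B U i) (U' i)) ∧
      ∀ i, U' i ≤ gradedOrthogonal B U' i := by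
  choose C hC using fun i => (gradedOrthogonal B U i).exists_isCompl
  choose ρ hρU hρ using exists_proj_pairing_eq_of_disjoint hσ hσB hB fun i => (hC i).disjoint
  refine ⟨fun i => (C i).map (LinearMap.id - (2 : 𝕜)⁻¹ • ρ i),
    fun i => Submodule.isCompl_map_id_sub (hC i) _ fun v => hU i ((U i).smul_mem _ (hρU i v)), ?_⟩
  rintro i _ ⟨c, hc, rfl⟩
  refine mem_gradedOrthogonal.mpr ?_
  rintro j _ ⟨c', hc', rfl⟩
  have hρc := hρ i c j c' hc'
  have hρc' := hρ j c' i c hc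
  have hρρ := mem_gradedOrthogonal.mp (hU i (hρU i c)) j _ (hρU j c')
  have hsymm := hB (Pi.single i c) (Pi.single j (ρ j c'))
  have hsymm' := hB (Pi.single j c') (Pi.single i c)
  have h22 : (2 : 𝕜) * 2⁻¹ = 1 := mul_inv_cancel₀ h2
  simp only [LinearMap.sub_apply, LinearMap.smul_apply, LinearMap.id_apply, Pi.single_sub,
    Pi.single_smul, map_sub, map_smul, smul_eq_mul]
  -- both cross terms equal `B c c' / 2`, the second one because `ε² = 1`
  linear_combination (-(2 : 𝕜)⁻¹) * hρc - 2⁻¹ * hsymm - 2⁻¹ * ε * hρc' - 2⁻¹ * ε * hsymm'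
    + 2⁻¹ ^ 2 * hρρ - 2⁻¹ * B (Pi.single i c) (Pi.single j c') * hε
    - B (Pi.single i c) (Pi.single j c') * h22

theorem eq_zero_of_pairing_single_eq_zero [Fintype ι] (hnondeg : ∀ x, (∀ y, B x y = 0) → x = 0)
    {i : ι} {x : E i} (hx : ∀ j (y : E j), B (Pi.single i x) (Pi.single j y) = 0) : x = 0 := by
  have h : (Pi.single i x : ∀ j, E j) = 0 := hnondeg _ fun y => by
    rw [← Finset.univ_sum_single y, map_sum]
    exact Finset.sum_eq_zero fun j _ => hx j (y j)
  simpa using congr_fun h i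

theorem exists_orthogonal_complement_in_gradedOrthogonal [Fintype ι]
    [∀ i, FiniteDimensional 𝕜 (E i)] (hσ : Function.Involutive σ) (hσB : PairsAlong B σ)
    {ε : 𝕜} (hB : ∀ x y, B x y = ε * B y x) (hnondeg : ∀ x, (∀ y, B x y = 0) → x = 0)
    {U U' : ∀ i, Submodule 𝕜 (E i)} (hU : ∀ i, U i ≤ gradedOrthogonal B U i)
    (hU' : ∀ i, IsCompl (gradedOrthogonal B U i) (U' i)) :
    ∃ W : ∀ i, Submodule 𝕜 (E i), (∀ i, Disjoint (U i) (W i)) ∧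
      (∀ i, U i ⊔ W i = gradedOrthogonal B U i) ∧ ∀ i, W i ≤ gradedOrthogonal B U' i := by
  choose π hπU hπ using exists_proj_pairing_eq_of_disjoint hσ hσB hB fun i => (hU' i).disjoint
  let W i := (gradedOrthogonal B U i).map (LinearMap.id - π i)
  have hWU' : ∀ i, W i ≤ gradedOrthogonal B U' i := by
    rintro i _ ⟨y, -, rfl⟩
    refine mem_gradedOrthogonal.mpr fun j z hz => ?_
    simp [Pi.single_sub, hπ i y j z hz]
  refine ⟨W, fun i => Submodule.disjoint_def.mpr fun x hxU hxW => ?_, fun i => ?_, hWU'⟩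
  · refine eq_zero_of_pairing_single_eq_zero hnondeg fun j y => ?_
    obtain ⟨a, ha, b, hb, rfl⟩ := Submodule.mem_sup.mp ((hU' j).sup_eq_top ▸ Submodule.mem_top :
      y ∈ gradedOrthogonal B U j ⊔ U' j)
    rw [Pi.single_add, map_add, pairing_eq_zero_of_mem_gradedOrthogonal hB hxU ha,
      mem_gradedOrthogonal.mp (hWU' i hxW) j b hb, add_zero]
  · refine le_antisymm (sup_le (hU i) ?_) fun y hy => ?_
    · rintro _ ⟨y, hy, rfl⟩
      exact sub_mem hy (hU i (hπU i y))
    · rw [show y = π i y + (LinearMap.id - π i : E i →ₗ[𝕜] E i) y by simp]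
      exact Submodule.add_mem_sup (hπU i y) ⟨y, hy, rfl⟩

theorem pairing_pi_eq_of_single [Fintype ι] {g : ∀ i, E i → E i}
    (hg : ∀ i j u v, B (Pi.single i (g i u)) (Pi.single j (g j v)) =
      B (Pi.single i u) (Pi.single j v))
    (x y : ∀ i, E i) : B (fun i => g i (x i)) (fun i => g i (y i)) = B x y := by
  conv_lhs => rw [← Finset.univ_sum_single fun i => g i (x i),
    ← Finset.univ_sum_single fun i => g i (y i)]
  conv_rhs => rw [← Finset.univ_sum_single x, ← Finset.univ_sum_single y]
  simp only [map_sum, LinearMap.sum_apply, hg]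

theorem isotropicFlag_pairing_eq_zero {ε : 𝕜} (hB : ∀ x y, B x y = ε * B y x)
    {U W U' : ∀ i, Submodule 𝕜 (E i)} (hU : ∀ i, U i ≤ gradedOrthogonal B U i)
    (hW : ∀ i, W i ≤ gradedOrthogonal B U i) (hWU' : ∀ i, W i ≤ gradedOrthogonal B U' i)
    (hU' : ∀ i, U' i ≤ gradedOrthogonal B U' i) (i j : ι) (k l : Fin 3)
    (hkl : flagWeight k + flagWeight l ≠ 0) (x : E i) (hx : x ∈ ![U i, W i, U' i] k) (y : E j)
    (hy : y ∈ ![U j, W j, U' j] l) : B (Pi.single i x) (Pi.single j y) = 0 := by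
  fin_cases k <;> fin_cases l <;> (try exact absurd hkl (by decide))
  · exact mem_gradedOrthogonal.mp (hU i hx) j y hy
  · exact pairing_eq_zero_of_mem_gradedOrthogonal hB hx (hW j hy)
  · exact mem_gradedOrthogonal.mp (hW i hx) j y hy
  · exact mem_gradedOrthogonal.mp (hWU' i hx) j y hy
  · exact pairing_eq_zero_of_mem_gradedOrthogonal hB hx (hWU' j hy)
  · exact mem_gradedOrthogonal.mp (hU' i hx) j y hy

end GradedForm

section WeightMatrix

variable {𝕜 I : Type*} [Field 𝕜] [Fintype I] {m n : ℕ}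

open scoped Classical in
noncomputable def weightGL {e : I → Module.End 𝕜 (Fin n → 𝕜)}
    (he : CompleteOrthogonalIdempotents e) (w : I → ℤ) (c : 𝕜) : GL (Fin n) 𝕜 :=
  if hc : c = 0 then 1
  else Units.map (LinearMap.toMatrixAlgEquiv'.toMonoidHom.comp (weightHom he w)) (Units.mk0 c hc)

variable {e : I → Module.End 𝕜 (Fin n → 𝕜)} (he : CompleteOrthogonalIdempotents e) (w : I → ℤ)
  {c : 𝕜}

theorem coe_weightGL (hc : c ≠ 0) :
    (weightGL he w c : Matrix (Fin n) (Fin n) 𝕜) = LinearMap.toMatrix' (weightAction e w c) := by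
  rw [weightGL, dif_neg hc]
  rfl

theorem coe_weightGL_inv (hc : c ≠ 0) :
    (↑(weightGL he w c)⁻¹ : Matrix (Fin n) (Fin n) 𝕜) =
      LinearMap.toMatrix' (weightAction e w c⁻¹) := by
  rw [weightGL, dif_neg hc]
  rfl

theorem weightGL_mulVec (hc : c ≠ 0) (x : Fin n → 𝕜) :
    (weightGL he w c : Matrix (Fin n) (Fin n) 𝕜) *ᵥ x = weightAction e w c x := by
  rw [coe_weightGL he w hc, LinearMap.toMatrix'_mulVec]

noncomputable def diagonalPart (e' : I → Module.End 𝕜 (Fin m → 𝕜))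
    (e : I → Module.End 𝕜 (Fin n → 𝕜)) (X : Matrix (Fin m) (Fin n) 𝕜) :
    Matrix (Fin m) (Fin n) 𝕜 :=
  LinearMap.toMatrix' (∑ k, e' k ∘ₗ Matrix.toLin' X ∘ₗ e k)

theorem diagonalPart_mulVec_of_apply_eq {e : I → Module.End 𝕜 (Fin n → 𝕜)}
    (he : OrthogonalIdempotents e) (e' : I → Module.End 𝕜 (Fin m → 𝕜))
    (X : Matrix (Fin m) (Fin n) 𝕜) {l : I} {x : Fin n → 𝕜} (hx : e l x = x) :
    diagonalPart e' e X *ᵥ x = e' l (X *ᵥ x) := by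
  classical
  have hortho : ∀ k, k ≠ l → e k x = 0 := fun k hkl => by
    rw [← hx, ← Module.End.mul_apply, he.ortho hkl, LinearMap.zero_apply]
  rw [diagonalPart, LinearMap.toMatrix'_mulVec, LinearMap.sum_apply,
    Finset.sum_eq_single l (fun k _ hkl => by simp [hortho k hkl]) (by simp)]
  simp [hx]

theorem diagonalPart_flagProj_mulVec {P : Fin 3 → Submodule 𝕜 (Fin n → 𝕜)}
    {P' : Fin 3 → Submodule 𝕜 (Fin m → 𝕜)} (h01 : Disjoint (P 0) (P 1))
    (h2 : IsCompl (P 0 ⊔ P 1) (P 2)) (h01' : Disjoint (P' 0) (P' 1))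
    (h2' : IsCompl (P' 0 ⊔ P' 1) (P' 2)) {X : Matrix (Fin m) (Fin n) 𝕜}
    (hX0 : ∀ x ∈ P 0, X *ᵥ x ∈ P' 0) (hX1 : ∀ x ∈ P 0 ⊔ P 1, X *ᵥ x ∈ P' 0 ⊔ P' 1) :
    let N := diagonalPart (flagProj h01' h2') (flagProj h01 h2) X
    (∀ x ∈ P 0, N *ᵥ x = X *ᵥ x) ∧ (∀ x ∈ P 1, N *ᵥ x ∈ P' 1 ∧ X *ᵥ x - N *ᵥ x ∈ P' 0) ∧
      ∀ x ∈ P 2, N *ᵥ x ∈ P' 2 := by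
  have hN : ∀ k, ∀ x ∈ P k, diagonalPart (flagProj h01' h2') (flagProj h01 h2) X *ᵥ x =
      flagProj h01' h2' k (X *ᵥ x) := fun k x hx =>
    diagonalPart_mulVec_of_apply_eq
      (completeOrthogonalIdempotents_flagProj h01 h2).toOrthogonalIdempotents _ _
      (flagProj_of_mem h01 h2 hx)
  refine ⟨fun x hx => ?_, fun x hx => ?_, fun x hx => ?_⟩ <;> rw [hN _ x hx]
  · exact flagProj_of_mem h01' h2' (hX0 x hx)
  · exact ⟨flagProj_mem h01' h2' 1 _,
      sub_flagProj_one_mem h01' h2' (hX1 x (Submodule.mem_sup_right hx))⟩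
  · exact flagProj_mem h01' h2' 2 _

theorem tendsto_weightGL_conj [TopologicalSpace 𝕜] [IsTopologicalRing 𝕜]
    {e' : I → Module.End 𝕜 (Fin m → 𝕜)} (he' : CompleteOrthogonalIdempotents e')
    {w : I → ℤ} (hw : Function.Injective w) (X : Matrix (Fin m) (Fin n) 𝕜)
    (hX : ∀ k l, w k < w l → e' k ∘ₗ Matrix.toLin' X ∘ₗ e l = 0) :
    Tendsto (fun c : 𝕜 => (weightGL he' w c : Matrix (Fin m) (Fin m) 𝕜) * X *
        (↑(weightGL he w c)⁻¹ : Matrix (Fin n) (Fin n) 𝕜)) (𝓝[≠] 0) (𝓝 (diagonalPart e' e X)) := by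
  have h := tendsto_sum_zpow_smul (𝕜 := 𝕜) hw
    (fun k l => LinearMap.toMatrix' (e' k ∘ₗ Matrix.toLin' X ∘ₗ e l))
    fun k l hkl => by rw [hX k l hkl, map_zero]
  rw [diagonalPart, map_sum]
  refine h.congr' (eventually_nhdsWithin_of_forall fun c (hc : c ≠ 0) => ?_)
  dsimp only
  rw [coe_weightGL he' w hc, coe_weightGL_inv he w hc, ← LinearMap.toMatrix'_toLin' X,
    ← LinearMap.toMatrix'_comp, ← LinearMap.toMatrix'_comp, LinearMap.toMatrix'_toLin',
    LinearMap.comp_assoc, weightAction_comp_comp_inv _ _ _ _ hc]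
  simp [map_sum, map_smul]

end WeightMatrix

section EpsRep

variable {𝕜 ι A : Type*} [DecidableEq ι] {d : ι → ℕ}

def IsEpsRep [Field 𝕜] (B : (∀ i, Fin (d i) → 𝕜) →ₗ[𝕜] (∀ i, Fin (d i) → 𝕜) →ₗ[𝕜] 𝕜)
    (s t : A → ι) (σa : A → A) (X : ∀ a, Matrix (Fin (d (t a))) (Fin (d (s a))) 𝕜) : Prop :=
  ∀ a (x : Fin (d (s a)) → 𝕜) (y : Fin (d (s (σa a))) → 𝕜),
    B (Pi.single (t a) (X a *ᵥ x)) (Pi.single (s (σa a)) y) +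
      B (Pi.single (s a) x) (Pi.single (t (σa a)) (X (σa a) *ᵥ y)) = 0

variable [Field 𝕜] {B : (∀ i, Fin (d i) → 𝕜) →ₗ[𝕜] (∀ i, Fin (d i) → 𝕜) →ₗ[𝕜] 𝕜}
  {s t : A → ι} {σa : A → A} {X : ∀ a, Matrix (Fin (d (t a))) (Fin (d (s a))) 𝕜}

theorem IsEpsRep.mulVec_mem_gradedOrthogonal (hX : IsEpsRep B s t σa X) {σv : ι → ι}
    (hs : ∀ a, s (σa a) = σv (t a)) (hσB : PairsAlong B σv)
    {U : ∀ i, Submodule 𝕜 (Fin (d i) → 𝕜)} (hUX : ∀ a, ∀ x ∈ U (s a), X a *ᵥ x ∈ U (t a))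
    (a : A) {x : Fin (d (s a)) → 𝕜} (hx : x ∈ gradedOrthogonal B U (s a)) :
    X a *ᵥ x ∈ gradedOrthogonal B U (t a) := by
  refine mem_gradedOrthogonal.mpr fun j y hy => ?_
  by_cases hj : j = s (σa a)
  · subst hj
    rw [eq_neg_of_add_eq_zero_left (hX a x y),
      mem_gradedOrthogonal.mp hx _ _ (hUX _ y hy), neg_zero]
  · exact hσB (t a) j (hs a ▸ hj) _ y

theorem IsEpsRep.conj (hX : IsEpsRep B s t σa X) (g : ∀ i, GL (Fin (d i)) 𝕜)
    (hg : ∀ i j u v, B (Pi.single i ((↑(g i) : Matrix _ _ 𝕜) *ᵥ u))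
      (Pi.single j ((↑(g j) : Matrix _ _ 𝕜) *ᵥ v)) = B (Pi.single i u) (Pi.single j v)) :
    IsEpsRep B s t σa fun a => (↑(g (t a)) : Matrix (Fin (d (t a))) (Fin (d (t a))) 𝕜) * X a *
      (↑(g (s a))⁻¹ : Matrix (Fin (d (s a))) (Fin (d (s a))) 𝕜) := by
  have hconj : ∀ b z, ((↑(g (t b)) : Matrix (Fin (d (t b))) (Fin (d (t b))) 𝕜) * X b *
      (↑(g (s b))⁻¹ : Matrix (Fin (d (s b))) (Fin (d (s b))) 𝕜)) *ᵥ
      ((↑(g (s b)) : Matrix (Fin (d (s b))) (Fin (d (s b))) 𝕜) *ᵥ z) =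
        (↑(g (t b)) : Matrix (Fin (d (t b))) (Fin (d (t b))) 𝕜) *ᵥ (X b *ᵥ z) := by
    intro b z
    rw [mulVec_mulVec, Matrix.mul_assoc, Units.inv_mul, Matrix.mul_one, mulVec_mulVec]
  intro a x y
  have hsurj : ∀ i (z : Fin (d i) → 𝕜),
      ∃ z', z = (↑(g i) : Matrix (Fin (d i)) (Fin (d i)) 𝕜) *ᵥ z' :=
    fun i z => ⟨(↑(g i)⁻¹ : Matrix (Fin (d i)) (Fin (d i)) 𝕜) *ᵥ z, by simp [mulVec_mulVec]⟩
  obtain ⟨x, rfl⟩ := hsurj _ x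
  obtain ⟨y, rfl⟩ := hsurj _ y
  rw [hconj, hconj, hg, hg]
  exact hX a x y

end EpsRep

theorem isClosed_setOf_isEpsRep {𝕜 ι A : Type*} [NontriviallyNormedField 𝕜] [CompleteSpace 𝕜]
    [DecidableEq ι] {d : ι → ℕ} (B : (∀ i, Fin (d i) → 𝕜) →ₗ[𝕜] (∀ i, Fin (d i) → 𝕜) →ₗ[𝕜] 𝕜)
    (s t : A → ι) (σa : A → A) : IsClosed {X | IsEpsRep B s t σa X} := by
  simp only [IsEpsRep, Set.ofPred_forall]
  refine isClosed_iInter fun a => isClosed_iInter fun x => isClosed_iInter fun y =>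
    isClosed_eq (Continuous.add ?_ ?_) continuous_const
  · exact ((gradedPairing B _ _).flip y).continuous_of_finiteDimensional.comp
      ((continuous_apply a).matrix_mulVec continuous_const)
  · exact (gradedPairing B _ _ x).continuous_of_finiteDimensional.comp
      ((continuous_apply (σa a)).matrix_mulVec continuous_const)

theorem exists_degeneration_of_flag {𝕜 ι A : Type*} [NontriviallyNormedField 𝕜] [CompleteSpace 𝕜]
    [Fintype ι] [DecidableEq ι] {d : ι → ℕ}
    {B : (∀ i, Fin (d i) → 𝕜) →ₗ[𝕜] (∀ i, Fin (d i) → 𝕜) →ₗ[𝕜] 𝕜} {s t : A → ι} {σa : A → A}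
    {X : ∀ a, Matrix (Fin (d (t a))) (Fin (d (s a))) 𝕜} (hX : IsEpsRep B s t σa X)
    {P : ∀ i, Fin 3 → Submodule 𝕜 (Fin (d i) → 𝕜)} (h01 : ∀ i, Disjoint (P i 0) (P i 1))
    (h2 : ∀ i, IsCompl (P i 0 ⊔ P i 1) (P i 2))
    (hP : ∀ i j k l, flagWeight k + flagWeight l ≠ 0 → ∀ x ∈ P i k, ∀ y ∈ P j l,
      B (Pi.single i x) (Pi.single j y) = 0)
    (hX0 : ∀ a, ∀ x ∈ P (s a) 0, X a *ᵥ x ∈ P (t a) 0)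
    (hX1 : ∀ a, ∀ x ∈ P (s a) 0 ⊔ P (s a) 1, X a *ᵥ x ∈ P (t a) 0 ⊔ P (t a) 1) :
    ∃ (lam : 𝕜 → ∀ i, GL (Fin (d i)) 𝕜) (N : ∀ a, Matrix (Fin (d (t a))) (Fin (d (s a))) 𝕜),
      (∀ c : 𝕜, c ≠ 0 → ∀ x y : ∀ i, Fin (d i) → 𝕜,
        B (fun i => (↑(lam c i) : Matrix _ _ 𝕜) *ᵥ x i)
          (fun i => (↑(lam c i) : Matrix _ _ 𝕜) *ᵥ y i) = B x y) ∧
      Tendsto (fun c : 𝕜 => fun a : A =>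
          (↑(lam c (t a)) : Matrix (Fin (d (t a))) (Fin (d (t a))) 𝕜) * X a *
            (↑(lam c (s a))⁻¹ : Matrix (Fin (d (s a))) (Fin (d (s a))) 𝕜))
        (𝓝[≠] 0) (𝓝 N) ∧
      IsEpsRep B s t σa N ∧
      (∀ a, ∀ x ∈ P (s a) 0, N a *ᵥ x = X a *ᵥ x) ∧
      (∀ a, ∀ x ∈ P (s a) 1, N a *ᵥ x ∈ P (t a) 1 ∧ X a *ᵥ x - N a *ᵥ x ∈ P (t a) 0) ∧
      ∀ a, ∀ x ∈ P (s a) 2, N a *ᵥ x ∈ P (t a) 2 := by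
  have he i := completeOrthogonalIdempotents_flagProj (h01 i) (h2 i)
  let lam c i := weightGL (he i) flagWeight c
  have hiso : ∀ c : 𝕜, c ≠ 0 → ∀ i j u v,
      B (Pi.single i ((↑(lam c i) : Matrix _ _ 𝕜) *ᵥ u))
        (Pi.single j ((↑(lam c j) : Matrix _ _ 𝕜) *ᵥ v)) = B (Pi.single i u) (Pi.single j v) := by
    intro c hc i j u v
    simp only [lam, weightGL_mulVec _ _ hc]
    exact weightAction_pairing (he i) (he j) (gradedPairing B i j)
      (fun k l hkl x y => hP i j k l hkl _ (flagProj_mem _ _ k x) _ (flagProj_mem _ _ l y)) hc u v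
  have hlim : Tendsto (fun c : 𝕜 => fun a : A =>
      (↑(lam c (t a)) : Matrix (Fin (d (t a))) (Fin (d (t a))) 𝕜) * X a *
        (↑(lam c (s a))⁻¹ : Matrix (Fin (d (s a))) (Fin (d (s a))) 𝕜))
      (𝓝[≠] 0) (𝓝 fun a => diagonalPart (flagProj (h01 (t a)) (h2 (t a)))
        (flagProj (h01 (s a)) (h2 (s a))) (X a)) :=
    tendsto_pi_nhds.mpr fun a => tendsto_weightGL_conj (he (s a)) (he (t a))
      flagWeight_injective (X a) fun k l hkl =>
        flagProj_comp_comp_eq_zero _ _ _ _ (Matrix.toLin' (X a)) (by simpa using hX0 a)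
          (by simpa using hX1 a) hkl
  have hblocks a := diagonalPart_flagProj_mulVec (h01 (s a)) (h2 (s a)) (h01 (t a)) (h2 (t a))
    (hX0 a) (hX1 a)
  refine ⟨lam, _, fun c hc => pairing_pi_eq_of_single (hiso c hc), hlim,
    (isClosed_setOf_isEpsRep B s t σa).mem_of_tendsto hlim
      (eventually_nhdsWithin_of_forall fun c hc => hX.conj _ (hiso c hc)),
    fun a => (hblocks a).1, fun a => (hblocks a).2.1, fun a => (hblocks a).2.2⟩

theorem symmetric_degeneration_of_isotropic_subrep_general
    {ι A : Type} [Fintype ι] [DecidableEq ι]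
    (s t : A → ι) (σv : ι → ι) (σa : A → A)
    (hσv : ∀ i, σv (σv i) = i)
    (hs : ∀ a, s (σa a) = σv (t a))
    (d : ι → ℕ)
    (ε : ℂ) (hε : ε = 1 ∨ ε = -1)
    (B : (∀ i, Fin (d i) → ℂ) →ₗ[ℂ] (∀ i, Fin (d i) → ℂ) →ₗ[ℂ] ℂ)
    (hnondeg : ∀ x, (∀ y, B x y = 0) → x = 0)
    (hepsilon : ∀ x y, B x y = ε * B y x)
    (hcompat : ∀ i j : ι, j ≠ σv i → ∀ (x : Fin (d i) → ℂ) (y : Fin (d j) → ℂ),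
      B (Pi.single i x) (Pi.single j y) = 0)
    (X : ∀ a : A, Matrix (Fin (d (t a))) (Fin (d (s a))) ℂ)
    (hXrep : ∀ a : A, ∀ (x : Fin (d (s a)) → ℂ) (y : Fin (d (s (σa a))) → ℂ),
      B (Pi.single (t a) ((X a).mulVec x)) (Pi.single (s (σa a)) y) +
        B (Pi.single (s a) x) (Pi.single (t (σa a)) ((X (σa a)).mulVec y)) = 0)
    (U : ∀ i, Submodule ℂ (Fin (d i) → ℂ))
    (hUsub : ∀ a : A, ∀ x ∈ U (s a), (X a).mulVec x ∈ U (t a))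
    (hUiso : ∀ i, ∀ x ∈ U i, ∀ j, ∀ y ∈ U j,
      B (Pi.single i x) (Pi.single j y) = 0)
    (Uperp : ∀ i, Submodule ℂ (Fin (d i) → ℂ))
    (hUperp : ∀ i (x : Fin (d i) → ℂ), x ∈ Uperp i ↔
      ∀ j : ι, ∀ y ∈ U j, B (Pi.single i x) (Pi.single j y) = 0) :
    ∃ (W U' : ∀ i, Submodule ℂ (Fin (d i) → ℂ))
      (lam : ℂ → ∀ i, GL (Fin (d i)) ℂ)
      (N : ∀ a : A, Matrix (Fin (d (t a))) (Fin (d (s a))) ℂ),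
      -- the decomposition `V = U ⊕ W ⊕ U'` refines `U^⊥ = U ⊕ W`
      (∀ i, U i ⊓ W i = ⊥) ∧
      (∀ i, (U i ⊔ W i) ⊓ U' i = ⊥) ∧
      (∀ i, U i ⊔ W i ⊔ U' i = ⊤) ∧
      (∀ i, U i ⊔ W i = Uperp i) ∧
      -- `λ(c)` is a graded isometry for every `c ≠ 0`
      (∀ c : ℂ, c ≠ 0 → ∀ x y : ∀ i, Fin (d i) → ℂ,
        B (fun i => (↑(lam c i) : Matrix _ _ ℂ).mulVec (x i))
          (fun i => (↑(lam c i) : Matrix _ _ ℂ).mulVec (y i)) = B x y) ∧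
      -- `N` is the limit of `λ(c)·X` as `c → 0`; in particular `N` lies in the closure of
      -- the orbit of `X` under the graded isometry group
      Filter.Tendsto
        (fun c : ℂ => fun a : A =>
          (↑(lam c (t a)) : Matrix (Fin (d (t a))) (Fin (d (t a))) ℂ) * X a *
            (↑(lam c (s a))⁻¹ : Matrix (Fin (d (s a))) (Fin (d (s a))) ℂ))
        (nhdsWithin (0 : ℂ) {(0 : ℂ)}ᶜ) (nhds N) ∧
      -- `N` is again an `ε`-representation
      (∀ a : A, ∀ (x : Fin (d (s a)) → ℂ) (y : Fin (d (s (σa a))) → ℂ),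
        B (Pi.single (t a) ((N a).mulVec x)) (Pi.single (s (σa a)) y) +
          B (Pi.single (s a) x) (Pi.single (t (σa a)) ((N (σa a)).mulVec y)) = 0) ∧
      -- `N ≅ L ⊕ (U^⊥/U) ⊕ ∇L`:
      (∀ a : A, ∀ x ∈ U (s a), (N a).mulVec x = (X a).mulVec x) ∧
      (∀ a : A, ∀ x ∈ W (s a),
        (N a).mulVec x ∈ W (t a) ∧ (X a).mulVec x - (N a).mulVec x ∈ U (t a)) ∧
      (∀ a : A, ∀ x ∈ U' (s a), (N a).mulVec x ∈ U' (t a)) ∧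
      -- the form pairs `U'` perfectly with `U`, identifying the `U'`-block with `∇L`
      (∀ i, ∀ x ∈ U' i,
        (∀ y ∈ U (σv i), B (Pi.single i x) (Pi.single (σv i) y) = 0) → x = 0) := by
  have hε2 : ε * ε = 1 := by rcases hε with rfl | rfl <;> norm_num
  obtain rfl : Uperp = gradedOrthogonal B U :=
    funext fun i => Submodule.ext fun x => (hUperp i x).trans mem_gradedOrthogonal.symm
  have hU : ∀ i, U i ≤ gradedOrthogonal B U i := fun i x hx =>
    mem_gradedOrthogonal.mpr (hUiso i x hx)
  obtain ⟨U', hU'compl, hU'iso⟩ :=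
    exists_isotropic_isCompl_gradedOrthogonal two_ne_zero hσv hcompat hε2 hepsilon hU
  obtain ⟨W, hUW, hUWsup, hWU'⟩ :=
    exists_orthogonal_complement_in_gradedOrthogonal hσv hcompat hepsilon hnondeg hU hU'compl
  have hcompl : ∀ i, IsCompl (U i ⊔ W i) (U' i) := fun i => hUWsup i ▸ hU'compl i
  have hXO : ∀ a, ∀ x ∈ U (s a) ⊔ W (s a), X a *ᵥ x ∈ U (t a) ⊔ W (t a) := fun a x hx => by
    rw [hUWsup] at hx ⊢
    exact IsEpsRep.mulVec_mem_gradedOrthogonal hXrep hs hcompat hUsub a hx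
  obtain ⟨lam, N, hiso, hlim, hN, hNU, hNW, hNU'⟩ := exists_degeneration_of_flag
    (P := fun i => ![U i, W i, U' i]) hXrep hUW hcompl
    (isotropicFlag_pairing_eq_zero hepsilon hU (fun i => hUWsup i ▸ le_sup_right) hWU' hU'iso)
    hUsub hXO
  refine ⟨W, U', lam, N, fun i => disjoint_iff.mp (hUW i),
    fun i => disjoint_iff.mp (hcompl i).disjoint, fun i => (hcompl i).sup_eq_top, hUWsup, hiso,
    hlim, hN, hNU, hNW, hNU', fun i x hx hxU => ?_⟩
  exact Submodule.disjoint_def.mp (hU'compl i).disjoint x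
    (mem_gradedOrthogonal_of_pairing_eq_zero hcompat hxU) hx

theorem symmetric_degeneration_of_isotropic_subrep
    {ι A : Type} [Fintype ι] [Fintype A] [DecidableEq ι]
    (s t : A → ι) (σv : ι → ι) (σa : A → A)
    (hσv : ∀ i, σv (σv i) = i) (hσa : ∀ a, σa (σa a) = a)
    (hs : ∀ a, s (σa a) = σv (t a)) (ht : ∀ a, t (σa a) = σv (s a))
    (d : ι → ℕ)
    (ε : ℂ) (hε : ε = 1 ∨ ε = -1)
    (B : (∀ i, Fin (d i) → ℂ) →ₗ[ℂ] (∀ i, Fin (d i) → ℂ) →ₗ[ℂ] ℂ)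
    (hnondeg : ∀ x, (∀ y, B x y = 0) → x = 0)
    (hepsilon : ∀ x y, B x y = ε * B y x)
    (hcompat : ∀ i j : ι, j ≠ σv i → ∀ (x : Fin (d i) → ℂ) (y : Fin (d j) → ℂ),
      B (Pi.single i x) (Pi.single j y) = 0)
    (X : ∀ a : A, Matrix (Fin (d (t a))) (Fin (d (s a))) ℂ)
    (hXrep : ∀ a : A, ∀ (x : Fin (d (s a)) → ℂ) (y : Fin (d (s (σa a))) → ℂ),
      B (Pi.single (t a) ((X a).mulVec x)) (Pi.single (s (σa a)) y) +
        B (Pi.single (s a) x) (Pi.single (t (σa a)) ((X (σa a)).mulVec y)) = 0)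
    (U : ∀ i, Submodule ℂ (Fin (d i) → ℂ))
    (hUsub : ∀ a : A, ∀ x ∈ U (s a), (X a).mulVec x ∈ U (t a))
    (hUiso : ∀ i, ∀ x ∈ U i, ∀ j, ∀ y ∈ U j,
      B (Pi.single i x) (Pi.single j y) = 0)
    (Uperp : ∀ i, Submodule ℂ (Fin (d i) → ℂ))
    (hUperp : ∀ i (x : Fin (d i) → ℂ), x ∈ Uperp i ↔
      ∀ j : ι, ∀ y ∈ U j, B (Pi.single i x) (Pi.single j y) = 0) :
    ∃ (W U' : ∀ i, Submodule ℂ (Fin (d i) → ℂ))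
      (lam : ℂ → ∀ i, GL (Fin (d i)) ℂ)
      (N : ∀ a : A, Matrix (Fin (d (t a))) (Fin (d (s a))) ℂ),
      -- the decomposition `V = U ⊕ W ⊕ U'` refines `U^⊥ = U ⊕ W`
      (∀ i, U i ⊓ W i = ⊥) ∧
      (∀ i, (U i ⊔ W i) ⊓ U' i = ⊥) ∧
      (∀ i, U i ⊔ W i ⊔ U' i = ⊤) ∧
      (∀ i, U i ⊔ W i = Uperp i) ∧
      -- `λ(c)` is a graded isometry for every `c ≠ 0`
      (∀ c : ℂ, c ≠ 0 → ∀ x y : ∀ i, Fin (d i) → ℂ,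
        B (fun i => (↑(lam c i) : Matrix _ _ ℂ).mulVec (x i))
          (fun i => (↑(lam c i) : Matrix _ _ ℂ).mulVec (y i)) = B x y) ∧
      -- `N` is the limit of `λ(c)·X` as `c → 0`; in particular `N` lies in the closure of
      -- the orbit of `X` under the graded isometry group
      Filter.Tendsto
        (fun c : ℂ => fun a : A =>
          (↑(lam c (t a)) : Matrix (Fin (d (t a))) (Fin (d (t a))) ℂ) * X a *
            (↑(lam c (s a))⁻¹ : Matrix (Fin (d (s a))) (Fin (d (s a))) ℂ))
        (nhdsWithin (0 : ℂ) {(0 : ℂ)}ᶜ) (nhds N) ∧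
      -- `N` is again an `ε`-representation
      (∀ a : A, ∀ (x : Fin (d (s a)) → ℂ) (y : Fin (d (s (σa a))) → ℂ),
        B (Pi.single (t a) ((N a).mulVec x)) (Pi.single (s (σa a)) y) +
          B (Pi.single (s a) x) (Pi.single (t (σa a)) ((N (σa a)).mulVec y)) = 0) ∧
      -- `N ≅ L ⊕ (U^⊥/U) ⊕ ∇L`:
      (∀ a : A, ∀ x ∈ U (s a), (N a).mulVec x = (X a).mulVec x) ∧
      (∀ a : A, ∀ x ∈ W (s a),
        (N a).mulVec x ∈ W (t a) ∧ (X a).mulVec x - (N a).mulVec x ∈ U (t a)) ∧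
      (∀ a : A, ∀ x ∈ U' (s a), (N a).mulVec x ∈ U' (t a)) ∧
      -- the form pairs `U'` perfectly with `U`, identifying the `U'`-block with `∇L`
      (∀ i, ∀ x ∈ U' i,
        (∀ y ∈ U (σv i), B (Pi.single i x) (Pi.single (σv i) y) = 0) → x = 0) :=
  symmetric_degeneration_of_isotropic_subrep_general s t σv σa hσv hs d ε hε B hnondeg hepsilon
    hcompat X hXrep U hUsub hUiso Uperp hUperp
end
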